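/- arXiv:1508.02946 — 4 statements merged into one kernel-verified Lean document; each statement's English description precedes it below -/
import Mathlib

section
/- Let F be a finite subset of ℝ with the Euclidean metric. (i) If |F| = 3, then F has no focal points, dim_fH(F) = 1, and dim_fB(F) ≥ 1. (ii) If |F| ≥ 4, then F has no focal points and dim_fH(F) < 1. -/
open Metric

namespace FinDim

variable {X : Type*} [MetricSpace X]

/-- `ν_F(a)`: the distance from `a` to a nearest other point of `F`. -/
noncomputable def nu (F : Finset X) (a : X) : ℝ :=
  sInf {r : ℝ | ∃ x ∈ F, x ≠ a ∧ r = dist a x}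

/-- `δ(F)`: the separation of `F`, the minimum distance between distinct points. -/
noncomputable def sep (F : Finset X) : ℝ :=
  sInf {r : ℝ | ∃ x ∈ F, ∃ y ∈ F, x ≠ y ∧ r = dist x y}

/-- A 2-covering of `F`: a family of subsets of `F` covering `F`,
each member having at least two elements. -/
def IsTwoCover (F : Finset X) (U : Finset (Finset X)) : Prop :=
  (∀ V ∈ U, V ⊆ F) ∧ (∀ V ∈ U, 2 ≤ V.card) ∧ ∀ a ∈ F, ∃ V ∈ U, a ∈ V

/-- `Δ(𝒰)`: maximum diameter of the members of the family `𝒰`. -/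
noncomputable def coverDiam (U : Finset (Finset X)) : ℝ :=
  sSup {r : ℝ | ∃ V ∈ U, r = Metric.diam (V : Set X)}

/-- `∇(F)`: the covering diameter of `F`. -/
noncomputable def nablaF (F : Finset X) : ℝ :=
  sInf {r : ℝ | ∃ U : Finset (Finset X), IsTwoCover F U ∧ r = coverDiam U}

/-- `a` is a focal point of `F`. -/
def IsFocal (F : Finset X) (a : X) : Prop :=
  a ∈ F ∧ ∀ x ∈ F, x ≠ a → dist a x = Metric.diam (F : Set X)

/-- `H^s_𝒰(F) = Σ_{U ∈ 𝒰} Δ(U)^s`. -/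
noncomputable def Hcov (U : Finset (Finset X)) (s : ℝ) : ℝ :=
  ∑ V ∈ U, Metric.diam (V : Set X) ^ s

/-- `H^s(F)`: minimum of `H^s_𝒰(F)` over 2-coverings `𝒰` with `Δ(𝒰) = ∇(F)`. -/
noncomputable def HH (F : Finset X) (s : ℝ) : ℝ :=
  sInf {h : ℝ | ∃ U : Finset (Finset X),
    IsTwoCover F U ∧ coverDiam U = nablaF F ∧ h = Hcov U s}

/-- The finite Hausdorff dimension: the unique `s₀ ∈ (0,∞)` with
`H^{s₀}(F) = Δ(F)^{s₀}` (when `F` has no focal points). -/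
noncomputable def dimfH (F : Finset X) : ℝ :=
  sInf {s : ℝ | 0 < s ∧ HH F s = Metric.diam (F : Set X) ^ s}

/-- `T_{∇(F)}(F)`: the minimal cardinality of a 2-covering `𝒰` with `Δ(𝒰) = ∇(F)`. -/
noncomputable def Tmin (F : Finset X) : ℕ :=
  sInf {n : ℕ | ∃ U : Finset (Finset X),
    IsTwoCover F U ∧ coverDiam U = nablaF F ∧ U.card = n}

/-- The finite box dimension `dim_fB(F) = ln T_{∇(F)}(F) / ln (Δ(F)/∇(F))`. -/
noncomputable def dimfB (F : Finset X) : ℝ :=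
  Real.log (Tmin F) / Real.log (Metric.diam (F : Set X) / nablaF F)

/-- `ν_A(x)` for a subset `A` of a metric space. -/
noncomputable def nuSet {Z : Type*} [MetricSpace Z] (A : Set Z) (x : Z) : ℝ :=
  sInf {r : ℝ | ∃ y ∈ A, y ≠ x ∧ r = dist x y}

/-- `∇(A) = sup {ν_A(x) : x ∈ A}` for a subset `A` of a metric space. -/
noncomputable def nablaSet {Z : Type*} [MetricSpace Z] (A : Set Z) : ℝ :=
  sSup {r : ℝ | ∃ x ∈ A, r = nuSet A x}

end FinDim

/-!
On the line, pairs of consecutive points form 2-coverings, and such a covering is optimal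
(`Δ(𝒰) = ∇(F)`) as soon as it only uses gaps of length at most `∇(F)`; every point lies on such
a short gap, since `∇(F)` bounds the distance from each point to its nearest neighbour.

For `a < b < c` the only optimal covering is `{{a, b}, {b, c}}`, so
`H^s(F) = (b - a)^s + (c - b)^s`, which equals `(c - a)^s` exactly at `s = 1`.

With four or more points some gap can be left out of an optimal covering (a gap longer than
`∇(F)` if there is one, the second gap otherwise), so `H^1(F) < Δ(F)`. On the other hand an
optimal covering has at least two members, so `H^0(F) ≥ 2 > Δ(F)^0`, and the intermediate
value theorem for the continuous function `s ↦ H^s(F) - Δ(F)^s` yields a solution in `(0, 1)`.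

A focal point `a` of `F ⊆ ℝ` forces `F ⊆ {a - Δ, a, a + Δ}`; with three or more points both
`a - Δ` and `a + Δ` would lie in `F`, at distance `2Δ > Δ`.
-/

open Finset

namespace FinDim

section MetricSpace

variable {X : Type*} {F : Finset X} {U : Finset (Finset X)}

lemma isTwoCover_singleton (hF : 2 ≤ F.card) : IsTwoCover F {F} :=
  ⟨fun _ hV => (mem_singleton.1 hV).subset, fun _ hV => mem_singleton.1 hV ▸ hF,
    fun _ ha => ⟨F, mem_singleton_self F, ha⟩⟩

variable [MetricSpace X]

lemma coverDiam_nonneg : 0 ≤ coverDiam U :=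
  Real.sSup_nonneg (by rintro _ ⟨V, -, rfl⟩; exact diam_nonneg)

lemma diam_le_coverDiam {V : Finset X} (hV : V ∈ U) : diam (V : Set X) ≤ coverDiam U := by
  refine le_csSup ((U.finite_toSet.image fun V : Finset X => diam (V : Set X)).bddAbove.mono ?_)
    ⟨V, hV, rfl⟩
  rintro _ ⟨V, hV, rfl⟩
  exact ⟨V, hV, rfl⟩

lemma coverDiam_le {b : ℝ} (hb : 0 ≤ b) (h : ∀ V ∈ U, diam (V : Set X) ≤ b) :
    coverDiam U ≤ b :=
  Real.sSup_le (by rintro _ ⟨V, hV, rfl⟩; exact h V hV) hb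

lemma nablaF_nonneg : 0 ≤ nablaF F :=
  Real.sInf_nonneg (by rintro _ ⟨U, -, rfl⟩; exact coverDiam_nonneg)

lemma IsTwoCover.nablaF_le (hU : IsTwoCover F U) : nablaF F ≤ coverDiam U :=
  csInf_le ⟨0, by rintro _ ⟨U, -, rfl⟩; exact coverDiam_nonneg⟩ ⟨U, hU, rfl⟩

lemma IsTwoCover.coverDiam_eq_nablaF (hU : IsTwoCover F U)
    (h : ∀ V ∈ U, diam (V : Set X) ≤ nablaF F) : coverDiam U = nablaF F :=
  (coverDiam_le nablaF_nonneg h).antisymm hU.nablaF_le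

lemma le_nablaF (hF : 2 ≤ F.card) {a : X} (ha : a ∈ F) {r : ℝ}
    (hr : ∀ b ∈ F, b ≠ a → r ≤ dist a b) : r ≤ nablaF F := by
  refine le_csInf ⟨_, {F}, isTwoCover_singleton hF, rfl⟩ ?_
  rintro _ ⟨U, hU, rfl⟩
  obtain ⟨V, hVU, haV⟩ := hU.2.2 a ha
  obtain ⟨b, hbV, hba⟩ := exists_mem_ne (hU.2.1 V hVU) a
  calc r ≤ dist a b := hr b (hU.1 V hVU hbV) hba
    _ ≤ diam (V : Set X) := dist_le_diam_of_mem V.finite_toSet.isBounded haV hbV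
    _ ≤ coverDiam U := diam_le_coverDiam hVU

lemma exists_dist_le_nablaF (hF : 2 ≤ F.card) {a : X} (ha : a ∈ F) :
    ∃ b ∈ F, b ≠ a ∧ dist a b ≤ nablaF F := by
  classical
  by_contra! h
  obtain ⟨b₀, hb₀, hb₀a⟩ := exists_mem_ne hF a
  have hne : ((F.erase a).image (dist a)).Nonempty :=
    ⟨_, mem_image_of_mem _ (mem_erase.2 ⟨hb₀a, hb₀⟩)⟩
  have hle := le_nablaF (r := ((F.erase a).image (dist a)).min' hne) hF ha fun b hb hba =>
    min'_le _ _ (mem_image_of_mem (dist a) (mem_erase.2 ⟨hba, hb⟩))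
  obtain ⟨b, hb, hbmin⟩ := mem_image.1 (min'_mem _ hne)
  have := h b (mem_of_mem_erase hb) (ne_of_mem_erase hb)
  linarith

open Classical in
noncomputable def optimalCovers (F : Finset X) : Finset (Finset (Finset X)) :=
  F.powerset.powerset.filter fun U => IsTwoCover F U ∧ coverDiam U = nablaF F

lemma mem_optimalCovers : U ∈ optimalCovers F ↔ IsTwoCover F U ∧ coverDiam U = nablaF F := by
  simp only [optimalCovers, mem_filter, mem_powerset, and_iff_right_iff_imp]
  exact fun h V hV => mem_powerset.2 (h.1.1 V hV)

lemma HH_eq_sInf (s : ℝ) : HH F s = sInf ((optimalCovers F).image (Hcov · s) : Set ℝ) := by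
  rw [HH, coe_image]
  congr 1
  ext h
  simp [mem_optimalCovers, eq_comm, and_assoc]

lemma Tmin_eq_sInf : Tmin F = sInf ((optimalCovers F).image card : Set ℕ) := by
  rw [Tmin, coe_image]
  congr 1
  ext n
  simp [mem_optimalCovers, and_assoc]

lemma Hcov_zero : Hcov U 0 = U.card := by
  simp [Hcov]

lemma coverDiam_le_Hcov_one : coverDiam U ≤ Hcov U 1 := by
  simp only [Hcov, Real.rpow_one]
  exact coverDiam_le (sum_nonneg fun _ _ => diam_nonneg) fun V hV =>
    single_le_sum (f := fun V : Finset X => diam (V : Set X)) (fun _ _ => diam_nonneg) hV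

lemma continuous_Hcov (hU : ∀ V ∈ U, 2 ≤ V.card) : Continuous (Hcov U) :=
  continuous_finsetSum _ fun V hV => Real.continuous_const_rpow
    (diam_pos (one_lt_card_iff_nontrivial.1 (hU V hV)) V.finite_toSet.isBounded).ne'

lemma two_le_card_of_mem_optimalCovers (hF : nablaF F < diam (F : Set X))
    (hU : U ∈ optimalCovers F) : 2 ≤ U.card := by
  obtain ⟨hU, hopt⟩ := mem_optimalCovers.1 hU
  by_contra! hcard
  obtain rfl | ⟨a, ha⟩ := F.eq_empty_or_nonempty
  · simp only [coe_empty, diam_empty] at hF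
    exact hF.not_ge nablaF_nonneg
  obtain ⟨V, hVU, -⟩ := hU.2.2 a ha
  have hFV : F ⊆ V := fun b hb => by
    obtain ⟨W, hWU, hbW⟩ := hU.2.2 b hb
    rwa [card_le_one.1 (by omega) W hWU V hVU] at hbW
  have := (diam_mono (coe_subset.2 hFV) V.finite_toSet.isBounded).trans (diam_le_coverDiam hVU)
  linarith

theorem dimfH_lt_one_of_Hcov_one_lt (hU : IsTwoCover F U) (hopt : coverDiam U = nablaF F)
    (hlt : Hcov U 1 < diam (F : Set X)) : dimfH F < 1 := by
  set D := diam (F : Set X)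
  have hU₀ : U ∈ optimalCovers F := mem_optimalCovers.2 ⟨hU, hopt⟩
  have hne : (optimalCovers F).Nonempty := ⟨U, hU₀⟩
  have hnabla : nablaF F < D := hopt ▸ coverDiam_le_Hcov_one.trans_lt hlt
  have hD : 0 < D := nablaF_nonneg.trans_lt hnabla
  have hHH (s : ℝ) : HH F s = (optimalCovers F).inf' hne (Hcov · s) := by
    rw [HH_eq_sInf, inf'_eq_csInf_image, coe_image]
  set f : ℝ → ℝ := fun s => (optimalCovers F).inf' hne (Hcov · s) - D ^ s
  have hf : Continuous f :=
    (Continuous.finset_inf'_apply hne fun V hV => continuous_Hcov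
      (mem_optimalCovers.1 hV).1.2.1).sub (Real.continuous_const_rpow hD.ne')
  have hf0 : 0 < f 0 := by
    have : (2 : ℝ) ≤ (optimalCovers F).inf' hne (Hcov · 0) := le_inf' hne _ fun V hV => by
      rw [Hcov_zero]; exact_mod_cast two_le_card_of_mem_optimalCovers hnabla hV
    simp only [f, Real.rpow_zero]
    linarith
  have hf1 : f 1 < 0 := by
    have := inf'_le (Hcov · 1) hU₀
    simp only [f, Real.rpow_one]
    linarith
  obtain ⟨s, ⟨hs0, hs1⟩, hs⟩ := intermediate_value_Ioo' zero_le_one hf.continuousOn ⟨hf1, hf0⟩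
  have hsol : HH F s = D ^ s := by
    rw [hHH]
    simp only [f] at hs
    linarith
  calc dimfH F ≤ s := csInf_le ⟨0, fun _ h => h.1.le⟩ ⟨hs0, hsol⟩
    _ < 1 := hs1

end MetricSpace

lemma _root_.Finset.exists_strictMonoOn_image_range_eq {α : Type*} [LinearOrder α]
    [Inhabited α] (F : Finset α) :
    ∃ x : ℕ → α, StrictMonoOn x (Set.Iio F.card) ∧ (range F.card).image x = F := by
  let e := F.orderEmbOfFin rfl
  refine ⟨fun i => if h : i < F.card then e ⟨i, h⟩ else default, ?_, ?_⟩
  · intro i hi j hj hij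
    simp only [dif_pos (Set.mem_Iio.1 hi), dif_pos (Set.mem_Iio.1 hj)]
    exact e.strictMono hij
  · ext y
    simp only [mem_image, mem_range]
    constructor
    · rintro ⟨i, hi, rfl⟩
      rw [dif_pos hi]
      exact F.orderEmbOfFin_mem rfl _
    · intro hy
      obtain ⟨⟨i, hi⟩, rfl⟩ : y ∈ Set.range e := by rwa [F.range_orderEmbOfFin rfl]
      exact ⟨i, hi, dif_pos hi⟩

lemma diam_pair_of_le {a b : ℝ} (h : a ≤ b) : diam (({a, b} : Finset ℝ) : Set ℝ) = b - a := by
  rw [coe_pair, diam_pair, Real.dist_eq, abs_sub_comm, abs_of_nonneg (sub_nonneg.2 h)]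

section Line

variable {F : Finset ℝ} {x : ℕ → ℝ} (hF : (range F.card).image x = F)
include hF

lemma mem_of_lt_card {i : ℕ} (hi : i < F.card) : x i ∈ F := by
  rw [← hF]
  exact mem_image_of_mem x (mem_range.2 hi)

lemma exists_eq_of_mem {y : ℝ} (hy : y ∈ F) : ∃ i < F.card, x i = y := by
  rw [← hF] at hy
  simpa only [mem_image, mem_range] using hy

variable (hx : StrictMonoOn x (Set.Iio F.card))
include hx

lemma diam_eq_sum_gaps (hn : 0 < F.card) :
    diam (F : Set ℝ) = ∑ i ∈ range (F.card - 1), (x (i + 1) - x i) := by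
  have hbound : ∀ i < F.card, x 0 ≤ x i ∧ x i ≤ x (F.card - 1) := fun i hi =>
    ⟨hx.monotoneOn (Set.mem_Iio.2 hn) (Set.mem_Iio.2 hi) (Nat.zero_le i),
      hx.monotoneOn (Set.mem_Iio.2 hi) (Set.mem_Iio.2 (by omega)) (by omega)⟩
  rw [sum_range_sub]
  refine le_antisymm (diam_le_of_forall_dist_le ?_ fun y hy z hz => ?_) ?_
  · linarith [hbound 0 hn]
  · obtain ⟨i, hi, rfl⟩ := exists_eq_of_mem hF hy
    obtain ⟨j, hj, rfl⟩ := exists_eq_of_mem hF hz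
    rw [Real.dist_eq, abs_sub_le_iff]
    constructor <;> linarith [hbound i hi, hbound j hj]
  · have := dist_le_diam_of_mem F.finite_toSet.isBounded
      (mem_of_lt_card hF (by omega : F.card - 1 < F.card)) (mem_of_lt_card hF hn)
    rw [Real.dist_eq] at this
    exact (le_abs_self _).trans this

lemma exists_short_gap (hn : 2 ≤ F.card) {k : ℕ} (hk : k < F.card) :
    ∃ i, i + 1 < F.card ∧ x (i + 1) - x i ≤ nablaF F ∧ (k = i ∨ k = i + 1) := by
  obtain ⟨_, hb, hbk, hdist⟩ := exists_dist_le_nablaF hn (mem_of_lt_card hF hk)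
  obtain ⟨j, hj, rfl⟩ := exists_eq_of_mem hF hb
  rw [Real.dist_eq] at hdist
  obtain hkj | rfl | hjk := lt_trichotomy k j
  · have : x (k + 1) ≤ x j := hx.monotoneOn (Set.mem_Iio.2 (by omega)) (Set.mem_Iio.2 hj) hkj
    exact ⟨k, by omega, by linarith [neg_abs_le (x k - x j)], Or.inl rfl⟩
  · exact absurd rfl hbk
  · have : x j ≤ x (k - 1) := hx.monotoneOn (Set.mem_Iio.2 hj) (Set.mem_Iio.2 (by omega)) (by omega)
    refine ⟨k - 1, by omega, ?_, Or.inr (by omega)⟩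
    rw [Nat.sub_add_cancel (by omega)]
    linarith [le_abs_self (x k - x j)]

lemma exists_proper_covering_set_of_short_gaps (hn : 4 ≤ F.card) :
    ∃ S ⊆ range (F.card - 1), ∃ j ∈ range (F.card - 1), j ∉ S ∧
      (∀ i ∈ S, x (i + 1) - x i ≤ nablaF F) ∧ ∀ k < F.card, ∃ i ∈ S, k = i ∨ k = i + 1 := by
  by_cases hlong : ∃ j ∈ range (F.card - 1), nablaF F < x (j + 1) - x j
  · obtain ⟨j, hj, hlt⟩ := hlong
    refine ⟨(range (F.card - 1)).filter fun i => x (i + 1) - x i ≤ nablaF F, filter_subset _ _,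
      j, hj, fun hjS => (mem_filter.1 hjS).2.not_gt hlt, fun i hi => (mem_filter.1 hi).2,
      fun k hk => ?_⟩
    obtain ⟨i, hi, hshort, hki⟩ := exists_short_gap hF hx (by omega) hk
    exact ⟨i, mem_filter.2 ⟨mem_range.2 (by omega), hshort⟩, hki⟩
  · simp only [not_exists, not_and, not_lt] at hlong
    refine ⟨(range (F.card - 1)).erase 1, erase_subset _ _, 1, mem_range.2 (by omega),
      notMem_erase 1 _, fun i hi => hlong i (mem_of_mem_erase hi), fun k hk => ?_⟩
    simp only [mem_erase, mem_range]
    obtain hk1 | rfl | hk3 : k ≤ 1 ∨ k = 2 ∨ 3 ≤ k := by omega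
    · exact ⟨0, by omega, by omega⟩
    · exact ⟨2, by omega, by omega⟩
    · exact ⟨k - 1, by omega, by omega⟩

lemma exists_optimal_cover_of_short_gaps {S : Finset ℕ} (hS : S ⊆ range (F.card - 1))
    (hshort : ∀ i ∈ S, x (i + 1) - x i ≤ nablaF F)
    (hcov : ∀ k < F.card, ∃ i ∈ S, k = i ∨ k = i + 1) :
    ∃ U, IsTwoCover F U ∧ coverDiam U = nablaF F ∧
      Hcov U 1 ≤ ∑ i ∈ S, (x (i + 1) - x i) := by
  have hlt : ∀ i ∈ S, i + 1 < F.card := fun i hi => by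
    have := mem_range.1 (hS hi); omega
  have hlt' (i : ℕ) (hi : i ∈ S) : x i < x (i + 1) :=
    hx (Set.mem_Iio.2 (by have := hlt i hi; omega)) (Set.mem_Iio.2 (hlt i hi)) (lt_add_one i)
  have hdiam : ∀ i ∈ S, diam (({x i, x (i + 1)} : Finset ℝ) : Set ℝ) = x (i + 1) - x i :=
    fun i hi => diam_pair_of_le (hlt' i hi).le
  set U := S.image fun i => ({x i, x (i + 1)} : Finset ℝ)
  have hU : IsTwoCover F U := by
    refine ⟨?_, ?_, ?_⟩
    · simp only [U, mem_image, forall_exists_index, and_imp, forall_apply_eq_imp_iff₂]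
      exact fun i hi => insert_subset (mem_of_lt_card hF (by have := hlt i hi; omega))
        (singleton_subset_iff.2 (mem_of_lt_card hF (hlt i hi)))
    · simp only [U, mem_image, forall_exists_index, and_imp, forall_apply_eq_imp_iff₂]
      exact fun i hi => (card_pair (hlt' i hi).ne).ge
    · intro a ha
      obtain ⟨k, hk, rfl⟩ := exists_eq_of_mem hF ha
      obtain ⟨i, hi, rfl | rfl⟩ := hcov k hk
      · exact ⟨_, mem_image_of_mem _ hi, mem_insert_self _ _⟩
      · exact ⟨_, mem_image_of_mem _ hi, mem_insert_of_mem (mem_singleton_self _)⟩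
  refine ⟨U, hU, hU.coverDiam_eq_nablaF ?_, ?_⟩
  · simp only [U, mem_image, forall_exists_index, and_imp, forall_apply_eq_imp_iff₂]
    exact fun i hi => (hdiam i hi).trans_le (hshort i hi)
  · calc Hcov U 1 = ∑ V ∈ U, diam (V : Set ℝ) := by simp only [Hcov, Real.rpow_one]
      _ ≤ ∑ i ∈ S, diam (({x i, x (i + 1)} : Finset ℝ) : Set ℝ) :=
        sum_image_le_of_nonneg fun _ _ => diam_nonneg
      _ = ∑ i ∈ S, (x (i + 1) - x i) := sum_congr rfl hdiam

end Line

theorem exists_optimal_cover_Hcov_one_lt_diam {F : Finset ℝ} (hn : 4 ≤ F.card) :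
    ∃ U, IsTwoCover F U ∧ coverDiam U = nablaF F ∧ Hcov U 1 < diam (F : Set ℝ) := by
  obtain ⟨x, hx, hF⟩ := F.exists_strictMonoOn_image_range_eq
  obtain ⟨S, hS, j, hj, hjS, hshort, hcov⟩ := exists_proper_covering_set_of_short_gaps hF hx hn
  obtain ⟨U, hU, hopt, hsum⟩ := exists_optimal_cover_of_short_gaps hF hx hS hshort hcov
  have hgap : ∀ i ∈ range (F.card - 1), 0 < x (i + 1) - x i := fun i hi => by
    have := mem_range.1 hi
    exact sub_pos.2 (hx (Set.mem_Iio.2 (by omega)) (Set.mem_Iio.2 (by omega)) (lt_add_one i))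
  refine ⟨U, hU, hopt, hsum.trans_lt ?_⟩
  rw [diam_eq_sum_gaps hF hx (by omega)]
  exact sum_lt_sum_of_subset hS hj hjS (hgap j hj) fun i hi _ => (hgap i hi).le

theorem not_isFocal_of_three_le_card {F : Finset ℝ} (hn : 3 ≤ F.card) (a : ℝ) : ¬ IsFocal F a := by
  rintro ⟨ha, hfoc⟩
  set D := diam (F : Set ℝ)
  have hsub : F ⊆ {a - D, a, a + D} := fun b hb => by
    simp only [mem_insert, mem_singleton]
    by_cases hba : b = a
    · exact Or.inr (Or.inl hba)
    · have := hfoc b hb hba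
      rw [Real.dist_eq, abs_eq diam_nonneg] at this
      rcases this with h | h
      · exact Or.inl (by linarith)
      · exact Or.inr (Or.inr (by linarith))
  have hF : F = {a - D, a, a + D} := eq_of_subset_of_card_le hsub (card_le_three.trans hn)
  have hdist := dist_le_diam_of_mem F.finite_toSet.isBounded
    (by rw [hF]; simp : a - D ∈ (F : Set ℝ)) (by rw [hF]; simp : a + D ∈ (F : Set ℝ))
  have hD : D = 0 := by
    rw [Real.dist_eq, show a - D - (a + D) = -(2 * D) by ring, abs_neg,
      abs_of_nonneg (by positivity)] at hdist
    linarith [(diam_nonneg : 0 ≤ D)]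
  have : F.card ≤ 1 := by rw [hF, hD]; simp
  omega

lemma _root_.Finset.exists_lt_lt_of_card_eq_three {α : Type*} [LinearOrder α]
    {F : Finset α} (hn : F.card = 3) : ∃ a b c, a < b ∧ b < c ∧ F = {a, b, c} := by
  obtain ⟨a, -⟩ := card_pos.1 (by omega : 0 < F.card)
  have : Inhabited α := ⟨a⟩
  obtain ⟨x, hx, hF⟩ := F.exists_strictMonoOn_image_range_eq
  have hlt (i : ℕ) (hi : i < 3) : i ∈ Set.Iio F.card := Set.mem_Iio.2 (hn ▸ hi)
  refine ⟨x 0, x 1, x 2, hx (hlt 0 (by omega)) (hlt 1 (by omega)) one_pos,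
    hx (hlt 1 (by omega)) (hlt 2 (by omega)) one_lt_two, ?_⟩
  rw [← hF, hn]
  simp only [range_add_one, range_zero, insert_empty_eq, image_insert, image_singleton]
  ext y
  simp only [mem_insert, mem_singleton]
  tauto

lemma eq_pair_or_eq_pair {α : Type*} [DecidableEq α] {a b c : α} {V : Finset α}
    (hV : V ⊆ {a, b, c}) (hcard : 2 ≤ V.card) (hac : ¬ (a ∈ V ∧ c ∈ V)) :
    V = {a, b} ∨ V = {b, c} := by
  by_cases ha : a ∈ V
  · refine Or.inl (eq_of_subset_of_card_le (fun y hy => ?_) (card_le_two.trans hcard))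
    have := hV hy
    simp only [mem_insert, mem_singleton] at this ⊢
    rcases this with rfl | rfl | rfl
    exacts [Or.inl rfl, Or.inr rfl, absurd ⟨ha, hy⟩ hac]
  · refine Or.inr (eq_of_subset_of_card_le (fun y hy => ?_) (card_le_two.trans hcard))
    have := hV hy
    simp only [mem_insert, mem_singleton] at this ⊢
    rcases this with rfl | rfl | rfl
    exacts [absurd hy ha, Or.inl rfl, Or.inr rfl]

lemma rpow_add_rpow_eq_rpow_add_iff {u v s : ℝ} (hu : 0 < u) (hv : 0 < v) :
    u ^ s + v ^ s = (u + v) ^ s ↔ s = 1 := by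
  have huv : 0 < u + v := add_pos hu hv
  have hanti : StrictAnti fun t : ℝ => (u / (u + v)) ^ t + (v / (u + v)) ^ t :=
    fun t t' htt' => add_lt_add
      (Real.rpow_lt_rpow_of_exponent_gt (by positivity) ((div_lt_one huv).2 (by linarith)) htt')
      (Real.rpow_lt_rpow_of_exponent_gt (by positivity) ((div_lt_one huv).2 (by linarith)) htt')
  have hnorm (t : ℝ) :
      (u / (u + v)) ^ t + (v / (u + v)) ^ t = (u ^ t + v ^ t) / (u + v) ^ t := by
    rw [Real.div_rpow hu.le huv.le, Real.div_rpow hv.le huv.le, add_div]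
  rw [← hanti.injective.eq_iff (a := s) (b := 1), hnorm, hnorm, Real.rpow_one, Real.rpow_one,
    Real.rpow_one, div_self huv.ne', div_eq_one_iff_eq (Real.rpow_pos_of_pos huv s).ne']

section Three

variable {a b c : ℝ} (hab : a < b) (hbc : b < c)
include hab hbc

lemma diam_three : diam (({a, b, c} : Finset ℝ) : Set ℝ) = c - a := by
  refine le_antisymm (diam_le_of_forall_dist_le (by linarith) fun y hy z hz => ?_) ?_
  · simp only [coe_insert, coe_singleton, Set.mem_insert_iff, Set.mem_singleton_iff] at hy hz
    rw [Real.dist_eq, abs_le]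
    rcases hy with rfl | rfl | rfl <;> rcases hz with rfl | rfl | rfl <;> constructor <;> linarith
  · have := dist_le_diam_of_mem ({a, b, c} : Finset ℝ).finite_toSet.isBounded
      (mem_coe.2 (mem_insert_self a _)) (mem_coe.2 (by simp : c ∈ ({a, b, c} : Finset ℝ)))
    rwa [Real.dist_eq, abs_sub_comm, abs_of_pos (by linarith)] at this

lemma isTwoCover_three : IsTwoCover {a, b, c} {{a, b}, {b, c}} := by
  refine ⟨?_, ?_, ?_⟩
  · simp only [mem_insert, mem_singleton, forall_eq_or_imp, forall_eq]
    exact ⟨by simp [insert_subset_iff], by simp⟩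
  · simp only [mem_insert, mem_singleton, forall_eq_or_imp, forall_eq]
    exact ⟨(card_pair hab.ne).ge, (card_pair hbc.ne).ge⟩
  · intro y hy
    simp only [mem_insert, mem_singleton] at hy
    rcases hy with rfl | rfl | rfl
    · exact ⟨{y, b}, mem_insert_self _ _, mem_insert_self _ _⟩
    · exact ⟨{a, y}, mem_insert_self _ _, by simp⟩
    · exact ⟨{b, y}, by simp, by simp⟩

lemma nablaF_three : nablaF {a, b, c} = max (b - a) (c - b) := by
  have hcard : 2 ≤ ({a, b, c} : Finset ℝ).card := by
    rw [card_eq_three.2 ⟨a, b, c, hab.ne, (hab.trans hbc).ne, hbc.ne, rfl⟩]; omega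
  refine le_antisymm ((isTwoCover_three hab hbc).nablaF_le.trans (coverDiam_le ?_ ?_))
    (max_le (le_nablaF (a := a) hcard (by simp) fun z hz hza => ?_)
      (le_nablaF (a := c) hcard (by simp) fun z hz hzc => ?_))
  · exact (sub_pos.2 hab).le.trans (le_max_left _ _)
  · simp only [mem_insert, mem_singleton, forall_eq_or_imp, forall_eq]
    rw [diam_pair_of_le hab.le, diam_pair_of_le hbc.le]
    exact ⟨le_max_left _ _, le_max_right _ _⟩
  · simp only [mem_insert, mem_singleton] at hz
    rw [Real.dist_eq]
    rcases hz with rfl | rfl | rfl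
    exacts [absurd rfl hza, le_abs.2 (Or.inr (by linarith)), le_abs.2 (Or.inr (by linarith))]
  · simp only [mem_insert, mem_singleton] at hz
    rw [Real.dist_eq]
    rcases hz with rfl | rfl | rfl
    exacts [le_abs.2 (Or.inl (by linarith)), le_abs.2 (Or.inl (by linarith)), absurd rfl hzc]

lemma eq_of_isTwoCover_three {U : Finset (Finset ℝ)} (hU : IsTwoCover {a, b, c} U)
    (hopt : coverDiam U = nablaF {a, b, c}) : U = {{a, b}, {b, c}} := by
  have hmem : ∀ V ∈ U, V = {a, b} ∨ V = {b, c} := fun V hV => by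
    refine eq_pair_or_eq_pair (hU.1 V hV) (hU.2.1 V hV) fun ⟨haV, hcV⟩ => ?_
    have hac := dist_le_diam_of_mem V.finite_toSet.isBounded haV hcV
    have hV := (diam_le_coverDiam hV).trans_eq (hopt.trans (nablaF_three hab hbc))
    rw [Real.dist_eq, abs_sub_comm, abs_of_pos (by linarith)] at hac
    have := max_lt (by linarith : b - a < c - a) (by linarith : c - b < c - a)
    linarith
  have hab' : {a, b} ∈ U := by
    obtain ⟨V, hV, haV⟩ := hU.2.2 a (by simp)
    obtain rfl | rfl := hmem V hV
    · exact hV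
    · simp only [mem_insert, mem_singleton] at haV
      exact absurd haV (by rintro (h | h) <;> linarith)
  have hbc' : {b, c} ∈ U := by
    obtain ⟨V, hV, hcV⟩ := hU.2.2 c (by simp)
    obtain rfl | rfl := hmem V hV
    · simp only [mem_insert, mem_singleton] at hcV
      exact absurd hcV (by rintro (h | h) <;> linarith)
    · exact hV
  ext V
  simp only [mem_insert, mem_singleton]
  exact ⟨hmem V, by rintro (rfl | rfl) <;> assumption⟩

lemma optimalCovers_three : optimalCovers {a, b, c} = {{{a, b}, {b, c}}} := by
  ext U
  rw [mem_optimalCovers, mem_singleton]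
  refine ⟨fun ⟨hU, hopt⟩ => eq_of_isTwoCover_three hab hbc hU hopt, ?_⟩
  rintro rfl
  refine ⟨isTwoCover_three hab hbc, (isTwoCover_three hab hbc).coverDiam_eq_nablaF ?_⟩
  simp only [mem_insert, mem_singleton, forall_eq_or_imp, forall_eq, nablaF_three hab hbc]
  rw [diam_pair_of_le hab.le, diam_pair_of_le hbc.le]
  exact ⟨le_max_left _ _, le_max_right _ _⟩

lemma pair_ne_pair_of_lt : ({a, b} : Finset ℝ) ≠ {b, c} := fun h => by
  have : a ∈ ({b, c} : Finset ℝ) := h ▸ mem_insert_self a {b}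
  simp only [mem_insert, mem_singleton] at this
  rcases this with h | h <;> linarith

lemma HH_three (s : ℝ) : HH {a, b, c} s = (b - a) ^ s + (c - b) ^ s := by
  rw [HH_eq_sInf, optimalCovers_three hab hbc, image_singleton, coe_singleton, csInf_singleton,
    Hcov, sum_pair (pair_ne_pair_of_lt hab hbc), diam_pair_of_le hab.le, diam_pair_of_le hbc.le]

lemma Tmin_three : Tmin {a, b, c} = 2 := by
  rw [Tmin_eq_sInf, optimalCovers_three hab hbc, image_singleton, coe_singleton, csInf_singleton,
    card_pair (pair_ne_pair_of_lt hab hbc)]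

theorem dimfH_three : dimfH {a, b, c} = 1 := by
  have hsol :
      {s : ℝ | 0 < s ∧ HH {a, b, c} s = diam (({a, b, c} : Finset ℝ) : Set ℝ) ^ s} = {1} := by
    ext s
    rw [Set.mem_ofPred_eq, HH_three hab hbc, diam_three hab hbc,
      show c - a = (b - a) + (c - b) by ring,
      rpow_add_rpow_eq_rpow_add_iff (sub_pos.2 hab) (sub_pos.2 hbc), Set.mem_singleton_iff]
    exact ⟨And.right, fun h => ⟨h ▸ one_pos, h⟩⟩
  rw [dimfH, hsol, csInf_singleton]

theorem one_le_dimfB_three : 1 ≤ dimfB {a, b, c} := by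
  rw [dimfB, Tmin_three hab hbc, diam_three hab hbc, nablaF_three hab hbc]
  have hm : 0 < max (b - a) (c - b) := (sub_pos.2 hab).trans_le (le_max_left _ _)
  have hlog : 0 < Real.log ((c - a) / max (b - a) (c - b)) :=
    Real.log_pos ((one_lt_div hm).2 (max_lt (by linarith) (by linarith)))
  rw [Nat.cast_ofNat, one_le_div hlog]
  refine Real.log_le_log (div_pos (by linarith) hm) ((div_le_iff₀ hm).2 ?_)
  linarith [le_max_left (b - a) (c - b), le_max_right (b - a) (c - b)]

end Three

end FinDim

open FinDim in
/-- For finite subsets of `ℝ`: with three points, `dim_fH = 1` and `dim_fB ≥ 1`;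
with at least four points, `dim_fH < 1`. -/
theorem stmt12 (F : Finset ℝ) :
    (F.card = 3 → (∀ a, ¬ IsFocal F a) ∧ dimfH F = 1 ∧ 1 ≤ dimfB F) ∧
    (4 ≤ F.card → (∀ a, ¬ IsFocal F a) ∧ dimfH F < 1) := by
  refine ⟨fun hn => ⟨not_isFocal_of_three_le_card hn.ge, ?_⟩,
    fun hn => ⟨not_isFocal_of_three_le_card (by omega), ?_⟩⟩
  · obtain ⟨a, b, c, hab, hbc, rfl⟩ := exists_lt_lt_of_card_eq_three hn
    exact ⟨dimfH_three hab hbc, one_le_dimfB_three hab hbc⟩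
  · obtain ⟨U, hU, hopt, hlt⟩ := exists_optimal_cover_Hcov_one_lt_diam hn
    exact dimfH_lt_one_of_Hcov_one_lt hU hopt hlt
end

section
/- Let Z be a metric space and let X ⊆ Z be a compact subset with at least two points such that ∇(X) = 0. Then for every ε > 0 there exists δ > 0 such that every compact subset Y ⊆ Z with at least two points satisfying d_H(X,Y) < δ has ∇(Y) < ε. -/
/-!
`∇(X) = 0` says that `X` has no isolated points. By compactness (a finite net of `X`) there is
then a uniform `δ₀ > 0` such that near every point of `X` lie two points of `X` at distance at
least `δ₀`. When `d_H(X, Y) < δ₀ / 2` these two points have distinct companions in `Y`, so every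
`y ∈ Y` has another point of `Y` nearby, which bounds `ν_Y(y)` and hence `∇(Y)`.
-/

open Metric

namespace FinDim

variable {Z : Type*} [MetricSpace Z] {A : Set Z} {x y : Z}

lemma nuSet_le_dist (hy : y ∈ A) (hyx : y ≠ x) : nuSet A x ≤ dist x y :=
  csInf_le ⟨0, by rintro _ ⟨_, _, _, rfl⟩; exact dist_nonneg⟩ ⟨y, hy, hyx, rfl⟩

lemma exists_dist_lt_of_nuSet_lt (h : ∃ y ∈ A, y ≠ x) {t : ℝ} (ht : nuSet A x < t) :
    ∃ y ∈ A, y ≠ x ∧ dist x y < t := by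
  obtain ⟨y, hy, hyx⟩ := h
  obtain ⟨_, ⟨z, hz, hzx, rfl⟩, hzt⟩ := (csInf_lt_iff
    ⟨0, by rintro _ ⟨_, _, _, rfl⟩; exact dist_nonneg⟩ (⟨_, y, hy, hyx, rfl⟩ :
      Set.Nonempty {r | ∃ y ∈ A, y ≠ x ∧ r = dist x y})).1 ht
  exact ⟨z, hz, hzx, hzt⟩

/-- Also when `x` is the only point of `A`: then `ν_A(x) = sInf ∅ = 0`. -/
lemma nuSet_le_diam (hA : Bornology.IsBounded A) (hx : x ∈ A) : nuSet A x ≤ diam A :=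
  (Real.sInf_le_sSup _ ⟨0, by rintro _ ⟨_, _, _, rfl⟩; exact dist_nonneg⟩
    ⟨diam A, by rintro _ ⟨y, hy, _, rfl⟩; exact dist_le_diam_of_mem hA hx hy⟩).trans
    (Real.sSup_le (by rintro _ ⟨y, hy, _, rfl⟩; exact dist_le_diam_of_mem hA hx hy) diam_nonneg)

lemma nuSet_le_nablaSet (hA : Bornology.IsBounded A) (hx : x ∈ A) : nuSet A x ≤ nablaSet A :=
  le_csSup ⟨diam A, by rintro _ ⟨x', hx', rfl⟩; exact nuSet_le_diam hA hx'⟩ ⟨x, hx, rfl⟩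

lemma nablaSet_le {c : ℝ} (hc : 0 ≤ c) (h : ∀ x ∈ A, nuSet A x ≤ c) : nablaSet A ≤ c :=
  Real.sSup_le (by rintro _ ⟨x, hx, rfl⟩; exact h x hx) hc

lemma preperfect_of_nablaSet_eq_zero (hA : Bornology.IsBounded A)
    (h2 : ∃ a ∈ A, ∃ b ∈ A, a ≠ b) (h : nablaSet A = 0) : Preperfect A := by
  obtain ⟨a, ha, b, hb, hab⟩ := h2
  refine fun x hx => accPt_iff_nhds.2 fun U hU => ?_
  obtain ⟨ε, hε, hεU⟩ := Metric.mem_nhds_iff.1 hU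
  have hother : ∃ y ∈ A, y ≠ x := by
    rcases eq_or_ne a x with rfl | hax
    · exact ⟨b, hb, hab.symm⟩
    · exact ⟨a, ha, hax⟩
  have hnu : nuSet A x < ε := by
    linarith [nuSet_le_nablaSet hA hx]
  obtain ⟨y, hy, hyx, hxy⟩ := exists_dist_lt_of_nuSet_lt hother hnu
  exact ⟨y, ⟨hεU (mem_ball'.2 hxy), hy⟩, hyx⟩

end FinDim

open Topology in
theorem IsCompact.exists_pos_forall_exists_separated_pair {X : Type*} [MetricSpace X] {K : Set X}
    (hK : IsCompact K) (hperf : Preperfect K) {r : ℝ} (hr : 0 < r) :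
    ∃ δ > 0, ∀ x ∈ K, ∃ p ∈ K, ∃ q ∈ K, dist x p < r ∧ dist x q < r ∧ δ ≤ dist p q := by
  have hnear : ∀ x ∈ K, ∃ y ∈ K, y ≠ x ∧ dist x y < r / 2 := fun x hx => by
    obtain ⟨y, ⟨hyball, hy⟩, hyx⟩ :=
      accPt_iff_nhds.1 (hperf x hx) _ (ball_mem_nhds x (half_pos hr))
    exact ⟨y, hy, hyx, mem_ball'.1 hyball⟩
  choose! partner hpartner hpartner_ne hpartner_dist using hnear
  obtain ⟨t, htK, htfin, hcover⟩ := hK.finite_cover_balls (half_pos hr)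
  have hδ : ∀ᶠ δ in 𝓝[>] (0 : ℝ), ∀ i ∈ t, δ ≤ dist i (partner i) :=
    (Filter.eventually_all_finite htfin).2 fun i hi => eventually_nhdsWithin_of_eventually_nhds
      (eventually_le_nhds (dist_pos.2 (hpartner_ne i (htK hi)).symm))
  obtain ⟨δ, hδle, hδpos⟩ := (hδ.and self_mem_nhdsWithin).exists
  refine ⟨δ, hδpos, fun x hx => ?_⟩
  obtain ⟨i, hi, hxi⟩ := Set.mem_iUnion₂.1 (hcover hx)
  have hxi : dist x i < r / 2 := mem_ball.1 hxi
  refine ⟨i, htK hi, partner i, hpartner i (htK hi), by linarith, ?_, hδle i hi⟩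
  linarith [dist_triangle x i (partner i), hpartner_dist i (htK hi)]

/-- The companions of `p` and `q` in `t` are distinct, so one of them is not `y`. -/
theorem exists_ne_dist_lt_of_hausdorffDist_lt {X : Type*} [MetricSpace X] {s t : Set X}
    {p q y : X} {δ c : ℝ} (hp : p ∈ s) (hq : q ∈ s) (hpq : 2 * δ ≤ dist p q)
    (hst : hausdorffDist s t < δ) (hfin : hausdorffEDist s t ≠ ⊤)
    (hyp : dist y p ≤ c) (hyq : dist y q ≤ c) :
    ∃ y' ∈ t, y' ≠ y ∧ dist y y' < c + δ := by
  obtain ⟨p', hp', hpp'⟩ := exists_dist_lt_of_hausdorffDist_lt hp hst hfin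
  obtain ⟨q', hq', hqq'⟩ := exists_dist_lt_of_hausdorffDist_lt hq hst hfin
  have hp'q' : p' ≠ q' := by
    rintro rfl
    linarith [dist_triangle_right p q p']
  rcases eq_or_ne p' y with hp'y | hp'y
  · exact ⟨q', hq', fun h => hp'q' (hp'y.trans h.symm), by linarith [dist_triangle y q q']⟩
  · exact ⟨p', hp', hp'y, by linarith [dist_triangle y p p']⟩

open FinDim in
/-- If `X` is compact with `∇(X) = 0`, then compact sets Hausdorff-close to `X`
have small `∇`. -/
theorem stmt15 {Z : Type*} [MetricSpace Z] (X : Set Z) (hX : IsCompact X)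
    (hX2 : ∃ x ∈ X, ∃ y ∈ X, x ≠ y) (hnab : nablaSet X = 0) :
    ∀ ε > 0, ∃ δ > 0, ∀ Y : Set Z, IsCompact Y → (∃ x ∈ Y, ∃ y ∈ Y, x ≠ y) →
      Metric.hausdorffDist X Y < δ → nablaSet Y < ε := by
  intro ε hε
  have hperf := preperfect_of_nablaSet_eq_zero hX.isBounded hX2 hnab
  obtain ⟨δ₀, hδ₀, hpair⟩ := hX.exists_pos_forall_exists_separated_pair hperf (r := ε / 4)
    (by positivity)
  refine ⟨min (ε / 4) (δ₀ / 2), by positivity, fun Y hY hY2 hXY => ?_⟩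
  obtain ⟨a, ha, -⟩ := hX2
  obtain ⟨b, hb, -⟩ := hY2
  have hfin := hausdorffEDist_ne_top_of_nonempty_of_bounded ⟨a, ha⟩ ⟨b, hb⟩ hX.isBounded
    hY.isBounded
  have hδ := min_le_left (ε / 4) (δ₀ / 2)
  refine (nablaSet_le (c := 3 * ε / 4) (by positivity) fun y hy => ?_).trans_lt (by linarith)
  obtain ⟨x, hx, hxy⟩ := exists_dist_lt_of_hausdorffDist_lt' hy hXY hfin
  obtain ⟨p, hp, q, hq, hxp, hxq, hpq⟩ := hpair x hx
  obtain ⟨y', hy', hy'y, hyy'⟩ :=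
    exists_ne_dist_lt_of_hausdorffDist_lt (y := y) (c := ε / 2) hp hq
    (by linarith [min_le_right (ε / 4) (δ₀ / 2)]) hXY hfin
    (by linarith [dist_triangle_left y p x]) (by linarith [dist_triangle_left y q x])
  linarith [nuSet_le_dist hy' hy'y]
end

section
/- Let n ≥ 1, let X ⊆ ℝⁿ be a nonempty compact set, and let ε > 0. Then the finite set F_ε := ε·ℤⁿ ∩ ⋃{Q : Q ∈ 𝒬(ε,X)} has at least two points, is locally uniform with δ(F_ε) = ∇(F_ε) = ε, and satisfies d_H(F_ε, X) ≤ ε√n. -/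
open Metric

namespace FinDim

/-- The closed axis-parallel cube of the `ε`-tiling of `ℝⁿ` indexed by `m ∈ ℤⁿ`. -/
def cube (n : ℕ) (ε : ℝ) (m : Fin n → ℤ) : Set (EuclideanSpace ℝ (Fin n)) :=
  {x | ∀ i, ε * (m i : ℝ) ≤ x i ∧ x i ≤ ε * ((m i : ℝ) + 1)}

/-- The set of corners (lattice points) of the cube indexed by `m`. -/
def corners (n : ℕ) (ε : ℝ) (m : Fin n → ℤ) : Set (EuclideanSpace ℝ (Fin n)) :=
  {p | ∀ i, p i = ε * (m i : ℝ) ∨ p i = ε * ((m i : ℝ) + 1)}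

/-- `F_ε = ε·ℤⁿ ∩ ⋃ 𝒬(ε,X)`: all lattice corners of cubes of the `ε`-tiling
that meet `X`. -/
def latticeApprox (n : ℕ) (X : Set (EuclideanSpace ℝ (Fin n))) (ε : ℝ) :
    Set (EuclideanSpace ℝ (Fin n)) :=
  {p | ∃ m : Fin n → ℤ, (cube n ε m ∩ X).Nonempty ∧ p ∈ corners n ε m}

end FinDim


namespace FinDimAux
open Metric FinDim

lemma coord_dist_le {n : ℕ} (x y : EuclideanSpace ℝ (Fin n)) (i : Fin n) :
    dist (x i) (y i) ≤ dist x y := by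
  rw [EuclideanSpace.dist_eq, ← Real.sqrt_sq (dist_nonneg (x := x i) (y := y i))]
  exact Real.sqrt_le_sqrt (Finset.single_le_sum
    (f := fun j => dist (x j) (y j) ^ 2) (fun j _ => sq_nonneg _) (Finset.mem_univ i))

lemma dist_le_coords {n : ℕ} {x y : EuclideanSpace ℝ (Fin n)} {c : ℝ} (hc : 0 ≤ c)
    (h : ∀ i, dist (x i) (y i) ≤ c) : dist x y ≤ c * Real.sqrt n := by
  rw [EuclideanSpace.dist_eq]
  have h1 : ∑ i, dist (x i) (y i) ^ 2 ≤ ∑ _i : Fin n, c ^ 2 :=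
    Finset.sum_le_sum fun i _ => pow_le_pow_left₀ dist_nonneg (h i) 2
  calc Real.sqrt (∑ i, dist (x i) (y i) ^ 2) ≤ Real.sqrt (n * c ^ 2) := by
        apply Real.sqrt_le_sqrt; simpa using h1
    _ = c * Real.sqrt n := by
        rw [Real.sqrt_mul (Nat.cast_nonneg n), Real.sqrt_sq hc, mul_comm]

/-- Abstract computation of `sep` and `nablaF`. -/
lemma sep_nabla_eq {Z : Type*} [MetricSpace Z] (F : Finset Z) (hne : F.Nonempty)
    (ε : ℝ) (hlow : ∀ p ∈ F, ∀ q ∈ F, p ≠ q → ε ≤ dist p q)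
    (hadj : ∀ p ∈ F, ∃ q ∈ F, q ≠ p ∧ dist p q = ε) :
    FinDim.sep F = ε ∧ FinDim.nablaF F = ε := by
  classical
  obtain ⟨p₀, hp₀⟩ := hne
  obtain ⟨q₀, hq₀F, hq₀ne, hq₀d⟩ := hadj p₀ hp₀
  have hmem : ε ∈ {r : ℝ | ∃ x ∈ F, ∃ y ∈ F, x ≠ y ∧ r = dist x y} :=
    ⟨p₀, hp₀, q₀, hq₀F, Ne.symm hq₀ne, hq₀d.symm⟩
  have hlb : ∀ r ∈ {r : ℝ | ∃ x ∈ F, ∃ y ∈ F, x ≠ y ∧ r = dist x y}, ε ≤ r := by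
    rintro r ⟨x, hx, y, hy, hxy, rfl⟩; exact hlow x hx y hy hxy
  constructor
  · exact le_antisymm (csInf_le ⟨ε, hlb⟩ hmem) (le_csInf ⟨ε, hmem⟩ hlb)
  · -- construct a partner function
    have hex : ∀ p : Z, ∃ q, p ∈ F → q ∈ F ∧ q ≠ p ∧ dist p q = ε := by
      intro p
      by_cases hp : p ∈ F
      · obtain ⟨q, hq, h1, h2⟩ := hadj p hp; exact ⟨q, fun _ => ⟨hq, h1, h2⟩⟩
      · exact ⟨p, fun h => absurd h hp⟩
    choose f hf using hex
    set U : Finset (Finset Z) := F.image (fun p => ({p, f p} : Finset Z)) with hU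
    have htc : IsTwoCover F U := by
      refine ⟨?_, ?_, ?_⟩
      · intro V hV
        obtain ⟨p, hp, rfl⟩ := Finset.mem_image.mp hV
        exact Finset.insert_subset hp (Finset.singleton_subset_iff.mpr (hf p hp).1)
      · intro V hV
        obtain ⟨p, hp, rfl⟩ := Finset.mem_image.mp hV
        rw [Finset.card_insert_of_notMem (by simp [Ne.symm (hf p hp).2.1]),
          Finset.card_singleton]
      · intro a ha
        exact ⟨{a, f a}, Finset.mem_image_of_mem _ ha, Finset.mem_insert_self _ _⟩
    have hdiam : ∀ p ∈ F, Metric.diam ((({p, f p} : Finset Z) : Set Z)) = ε := by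
      intro p hp
      have : (({p, f p} : Finset Z) : Set Z) = ({p, f p} : Set Z) := by simp
      rw [this, Metric.diam_pair, (hf p hp).2.2]
    have hcd : coverDiam U = ε := by
      have : {r : ℝ | ∃ V ∈ U, r = Metric.diam (V : Set Z)} = {ε} := by
        ext r
        simp only [Set.mem_setOf_eq, Set.mem_singleton_iff]
        constructor
        · rintro ⟨V, hV, rfl⟩
          obtain ⟨p, hp, rfl⟩ := Finset.mem_image.mp hV
          exact hdiam p hp
        · rintro rfl
          exact ⟨{p₀, f p₀}, Finset.mem_image_of_mem _ hp₀, (hdiam p₀ hp₀).symm⟩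
      rw [coverDiam, this, csSup_singleton]
    have hmem' : ε ∈ {r : ℝ | ∃ U : Finset (Finset Z), IsTwoCover F U ∧ r = coverDiam U} :=
      ⟨U, htc, hcd.symm⟩
    have hlb' : ∀ r ∈ {r : ℝ | ∃ U : Finset (Finset Z), IsTwoCover F U ∧ r = coverDiam U},
        ε ≤ r := by
      rintro r ⟨U', ⟨hsub, hcard, hcov⟩, rfl⟩
      obtain ⟨V, hVU, hp₀V⟩ := hcov p₀ hp₀
      obtain ⟨b, hbV, hbne⟩ := Finset.exists_mem_ne (hcard V hVU) p₀
      have h1 : ε ≤ dist b p₀ := hlow b (hsub V hVU hbV) p₀ hp₀ hbne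
      have h2 : dist b p₀ ≤ Metric.diam (V : Set Z) :=
        Metric.dist_le_diam_of_mem V.finite_toSet.isBounded hbV hp₀V
      have hfin : {r : ℝ | ∃ V ∈ U', r = Metric.diam (V : Set Z)} =
          (fun V : Finset Z => Metric.diam (V : Set Z)) '' ↑U' := by
        ext r; simp [eq_comm]
      have h3 : Metric.diam (V : Set Z) ≤ coverDiam U' := by
        rw [coverDiam]
        refine le_csSup ?_ ⟨V, hVU, rfl⟩
        rw [hfin]; exact (U'.finite_toSet.image _).bddAbove
      linarith
    exact le_antisymm (csInf_le ⟨ε, hlb'⟩ hmem') (le_csInf ⟨ε, hmem'⟩ hlb')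

lemma mem_cube_floor {n : ℕ} {ε : ℝ} (hε : 0 < ε) (x : EuclideanSpace ℝ (Fin n)) :
    x ∈ cube n ε (fun i => ⌊x i / ε⌋) := by
  intro i
  have h1 : ε * (⌊x i / ε⌋ : ℝ) ≤ ε * (x i / ε) :=
    mul_le_mul_of_nonneg_left (Int.floor_le _) hε.le
  have h2 : ε * (x i / ε) ≤ ε * ((⌊x i / ε⌋ : ℝ) + 1) :=
    mul_le_mul_of_nonneg_left (Int.lt_floor_add_one (x i / ε)).le hε.le
  have h3 : ε * (x i / ε) = x i := by field_simp
  exact ⟨by rw [← h3]; exact h1, by rw [← h3]; exact h2⟩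

lemma base_corner_mem {n : ℕ} {X : Set (EuclideanSpace ℝ (Fin n))} {ε : ℝ} (hε : 0 < ε)
    {x : EuclideanSpace ℝ (Fin n)} (hx : x ∈ X) :
    (WithLp.toLp 2 (fun i => ε * (⌊x i / ε⌋ : ℝ)) : EuclideanSpace ℝ (Fin n)) ∈ latticeApprox n X ε :=
  ⟨fun i => ⌊x i / ε⌋, ⟨x, mem_cube_floor hε x, hx⟩, fun _ => Or.inl rfl⟩

lemma corner_cube_dist {n : ℕ} {ε : ℝ} (hε : 0 < ε) {m : Fin n → ℤ}
    {p x : EuclideanSpace ℝ (Fin n)} (hp : p ∈ corners n ε m) (hx : x ∈ cube n ε m) :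
    dist p x ≤ ε * Real.sqrt n := by
  apply dist_le_coords hε.le
  intro i
  rw [Real.dist_eq, abs_sub_le_iff]
  have h1 := (hx i).1
  have h2 := (hx i).2
  rcases hp i with h | h <;> constructor <;> linarith [hε.le]

lemma lattice_sep {n : ℕ} {X : Set (EuclideanSpace ℝ (Fin n))} {ε : ℝ} (hε : 0 < ε)
    {p q : EuclideanSpace ℝ (Fin n)}
    (hp : p ∈ latticeApprox n X ε) (hq : q ∈ latticeApprox n X ε) (hne : p ≠ q) :
    ε ≤ dist p q := by
  have hcoord : ∀ r : EuclideanSpace ℝ (Fin n), r ∈ latticeApprox n X ε →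
      ∀ i, ∃ k : ℤ, r i = ε * k := by
    rintro r ⟨m, _, hc⟩ i
    rcases hc i with h | h
    · exact ⟨m i, h⟩
    · exact ⟨m i + 1, by rw [h]; push_cast; ring⟩
  have : ∃ i, p i ≠ q i := by
    by_contra h; push_neg at h; exact hne (PiLp.ext h)
  obtain ⟨i, hi⟩ := this
  obtain ⟨k, hk⟩ := hcoord p hp i
  obtain ⟨l, hl⟩ := hcoord q hq i
  have hkl : k ≠ l := by rintro rfl; exact hi (hk.trans hl.symm)
  have habs : (1 : ℝ) ≤ |(k : ℝ) - l| := by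
    have h0 : (1 : ℤ) ≤ |k - l| := Int.one_le_abs (sub_ne_zero.mpr hkl)
    exact_mod_cast h0
  have h1 : ε ≤ |p i - q i| := by
    rw [hk, hl, ← mul_sub, abs_mul, abs_of_pos hε]
    nlinarith
  calc ε ≤ |p i - q i| := h1
    _ = dist (p i) (q i) := (Real.dist_eq _ _).symm
    _ ≤ dist p q := coord_dist_le p q i

lemma lattice_adj {n : ℕ} (hn : 1 ≤ n) {X : Set (EuclideanSpace ℝ (Fin n))} {ε : ℝ}
    (hε : 0 < ε) {p : EuclideanSpace ℝ (Fin n)} (hp : p ∈ latticeApprox n X ε) :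
    ∃ q ∈ latticeApprox n X ε, q ≠ p ∧ dist p q = ε := by
  classical
  obtain ⟨m, hmeet, hpc⟩ := hp
  set i₀ : Fin n := ⟨0, hn⟩ with hi₀
  set q : EuclideanSpace ℝ (Fin n) := WithLp.toLp 2 fun i => if i = i₀ then
      (if p i₀ = ε * (m i₀ : ℝ) then ε * ((m i₀ : ℝ) + 1) else ε * (m i₀ : ℝ)) else p i with hqdef
  have hab : ε * (m i₀ : ℝ) ≠ ε * ((m i₀ : ℝ) + 1) := by
    intro h; nlinarith [hε]
  have hq0 : q i₀ = if p i₀ = ε * (m i₀ : ℝ) then ε * ((m i₀ : ℝ) + 1) else ε * (m i₀ : ℝ) := by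
    rw [hqdef]; simp
  have hqne : q i₀ ≠ p i₀ := by
    rw [hq0]
    rcases hpc i₀ with h | h
    · rw [if_pos h, h]; exact fun hh => hab hh.symm
    · rw [h, if_neg (fun hh => hab hh.symm)]
      exact fun hh => hab hh
  have hqd : |p i₀ - q i₀| = ε := by
    rw [hq0]
    rcases hpc i₀ with h | h
    · rw [if_pos h, h]; rw [abs_of_nonpos (by linarith)]; ring
    · rw [h, if_neg (fun hh => hab hh.symm)]
      rw [abs_of_nonneg (by linarith)]; ring
  have hqcorner : q ∈ corners n ε m := by
    intro i
    by_cases h : i = i₀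
    · subst h
      rw [hq0]
      by_cases h' : p i₀ = ε * (m i₀ : ℝ)
      · rw [if_pos h']; exact Or.inr rfl
      · rw [if_neg h']; exact Or.inl rfl
    · have : q i = p i := by rw [hqdef]; simp [h]
      rw [this]; exact hpc i
  refine ⟨q, ⟨m, hmeet, hqcorner⟩, fun h => hqne (by rw [h]), ?_⟩
  rw [EuclideanSpace.dist_eq]
  have hsum : ∀ i : Fin n, dist (p i) (q i) ^ 2 = if i = i₀ then ε ^ 2 else 0 := by
    intro i
    by_cases h : i = i₀
    · subst h; rw [if_pos rfl, Real.dist_eq, hqd]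
    · have : q i = p i := by rw [hqdef]; simp [h]
      rw [if_neg h, this, dist_self]; ring
  rw [Finset.sum_congr rfl (fun i _ => hsum i), Finset.sum_ite_eq' Finset.univ i₀ (fun _ => ε ^ 2),
    if_pos (Finset.mem_univ i₀), Real.sqrt_sq hε.le]

lemma latticeApprox_finite (n : ℕ) (X : Set (EuclideanSpace ℝ (Fin n))) (hX : IsCompact X)
    {ε : ℝ} (hε : 0 < ε) : (latticeApprox n X ε).Finite := by
  classical
  obtain ⟨R, hR⟩ := hX.isBounded.subset_closedBall 0
  set R' : ℝ := max R 0 with hR'def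
  have hR'0 : (0 : ℝ) ≤ R' := le_max_right _ _
  have hR' : X ⊆ Metric.closedBall 0 R' :=
    hR.trans (Metric.closedBall_subset_closedBall (le_max_left _ _))
  set M : ℤ := ⌈(R' + 2 * ε) / ε⌉ with hMdef
  have hMR : R' + 2 * ε ≤ M * ε := by
    have h := Int.le_ceil ((R' + 2 * ε) / ε)
    rw [div_le_iff₀ hε] at h
    exact h
  have key : ∀ k : ℤ, -R' - ε ≤ ε * k → ε * k ≤ R' + ε → k ∈ Set.Icc (-M) M := by
    intro k h1 h2
    constructor
    · have : ε * ((-M : ℤ) : ℝ) ≤ ε * (k : ℝ) := by push_cast; nlinarith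
      exact_mod_cast le_of_mul_le_mul_left this hε
    · have : ε * (k : ℝ) ≤ ε * ((M : ℤ) : ℝ) := by push_cast; nlinarith
      exact_mod_cast le_of_mul_le_mul_left this hε
  apply Set.Finite.subset (Set.Finite.image
    (f := fun m : Fin n → ℤ => (WithLp.toLp 2 (fun i => ε * (m i : ℝ)) : EuclideanSpace ℝ (Fin n)))
    (Set.Finite.pi (fun _ : Fin n => Set.finite_Icc (-M) M)))
  rintro p ⟨m, ⟨x, hxc, hxX⟩, hpc⟩
  refine ⟨fun i => if p i = ε * (m i : ℝ) then m i else m i + 1, ?_, ?_⟩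
  · rw [Set.mem_univ_pi]
    intro i
    have hxi : |x i| ≤ R' := by
      have hd : dist (x i) ((0 : EuclideanSpace ℝ (Fin n)) i) ≤ dist x 0 := coord_dist_le x 0 i
      have : dist x 0 ≤ R' := Metric.mem_closedBall.mp (hR' hxX)
      simpa [Real.dist_eq] using hd.trans this
    have h1 : ε * (m i : ℝ) ≤ x i := (hxc i).1
    have h2 : x i ≤ ε * ((m i : ℝ) + 1) := (hxc i).2
    have hx1 : -R' ≤ x i := by cases abs_le.mp hxi; linarith
    have hx2 : x i ≤ R' := by cases abs_le.mp hxi; linarith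
    by_cases h : p i = ε * (m i : ℝ)
    · rw [if_pos h]
      exact key (m i) (by linarith) (by linarith)
    · rw [if_neg h]
      refine key (m i + 1) ?_ ?_ <;> push_cast <;> nlinarith
  · ext i
    simp only [PiLp.toLp_apply]
    by_cases h : p i = ε * (m i : ℝ)
    · simp only [if_pos h]; exact h.symm
    · simp only [if_neg h]
      have hh := (hpc i).resolve_left h
      rw [hh]; push_cast; ring

end FinDimAux

open FinDim in
/-- The lattice approximation `F_ε` of a nonempty compact `X ⊆ ℝⁿ` is a finite,
locally uniform set with `δ(F_ε) = ∇(F_ε) = ε` and `d_H(F_ε, X) ≤ ε√n`. -/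
theorem stmt17 (n : ℕ) (hn : 1 ≤ n) (X : Set (EuclideanSpace ℝ (Fin n)))
    (hX : IsCompact X) (hne : X.Nonempty) (ε : ℝ) (hε : 0 < ε) :
    ∃ F : Finset (EuclideanSpace ℝ (Fin n)),
      (F : Set (EuclideanSpace ℝ (Fin n))) = latticeApprox n X ε ∧
      2 ≤ F.card ∧ sep F = ε ∧ nablaF F = ε ∧
      Metric.hausdorffDist (F : Set (EuclideanSpace ℝ (Fin n))) X ≤ ε * Real.sqrt n := by
  classical
  have hfin := FinDimAux.latticeApprox_finite n X hX hε
  have hcoe : (hfin.toFinset : Set (EuclideanSpace ℝ (Fin n))) = latticeApprox n X ε :=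
    hfin.coe_toFinset
  obtain ⟨x₀, hx₀⟩ := hne
  have hp₀ : (WithLp.toLp 2 (fun i => ε * (⌊x₀ i / ε⌋ : ℝ)) : EuclideanSpace ℝ (Fin n)) ∈
      latticeApprox n X ε := FinDimAux.base_corner_mem hε hx₀
  have hp₀F : (WithLp.toLp 2 (fun i => ε * (⌊x₀ i / ε⌋ : ℝ)) : EuclideanSpace ℝ (Fin n)) ∈
      hfin.toFinset := hfin.mem_toFinset.mpr hp₀
  have hFne : hfin.toFinset.Nonempty := ⟨_, hp₀F⟩
  have hlow : ∀ p ∈ hfin.toFinset, ∀ q ∈ hfin.toFinset, p ≠ q → ε ≤ dist p q := by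
    intro p hp q hq hne'
    exact FinDimAux.lattice_sep hε (hfin.mem_toFinset.mp hp) (hfin.mem_toFinset.mp hq) hne'
  have hadj : ∀ p ∈ hfin.toFinset, ∃ q ∈ hfin.toFinset, q ≠ p ∧ dist p q = ε := by
    intro p hp
    obtain ⟨q, hq, h1, h2⟩ := FinDimAux.lattice_adj hn hε (hfin.mem_toFinset.mp hp)
    exact ⟨q, hfin.mem_toFinset.mpr hq, h1, h2⟩
  obtain ⟨hsep, hnabla⟩ := FinDimAux.sep_nabla_eq hfin.toFinset hFne ε hlow hadj
  refine ⟨hfin.toFinset, hcoe, ?_, hsep, hnabla, ?_⟩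
  · obtain ⟨q, hqF, hqne, _⟩ := hadj _ hp₀F
    exact Finset.one_lt_card.mpr ⟨q, hqF, _, hp₀F, hqne⟩
  · rw [hcoe]
    apply Metric.hausdorffDist_le_of_mem_dist
      (mul_nonneg hε.le (Real.sqrt_nonneg _))
    · rintro p ⟨m, ⟨x, hxc, hxX⟩, hpc⟩
      exact ⟨x, hxX, FinDimAux.corner_cube_dist hε hpc hxc⟩
    · intro x hx
      refine ⟨WithLp.toLp 2 (fun i => ε * (⌊x i / ε⌋ : ℝ)), FinDimAux.base_corner_mem hε hx, ?_⟩
      rw [dist_comm]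
      exact FinDimAux.corner_cube_dist hε (fun _ => Or.inl rfl) (FinDimAux.mem_cube_floor hε x)
end

section
/- Let X ⊆ ℝⁿ be compact with ∇(X) = 0 < Δ(X), let c ∈ (0,1), and for each k ∈ ℕ set ε_k := c^k, N_k := |𝒬(ε_k,X)|, and F_k := ε_k·ℤⁿ ∩ ⋃{Q : Q ∈ 𝒬(ε_k,X)}. Suppose the limit lim_{k→∞} ln N_k / (−ln ε_k) exists and equals the Hausdorff dimension dim_H(X) of X (as holds, e.g., when X is the attractor of an iterated function system). Then for all sufficiently large k the set F_k has no focal points, and lim_{k→∞} dim_fH(F_k) = dim_H(X). -/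
open Metric

section CoordAux
variable {n : ℕ}

lemma coord_le_dist (x y : EuclideanSpace ℝ (Fin n)) (i : Fin n) : |x i - y i| ≤ dist x y := by
  rw [EuclideanSpace.dist_eq, ← Real.sqrt_sq (abs_nonneg (x i - y i))]
  apply Real.sqrt_le_sqrt
  rw [sq_abs]
  calc (x i - y i)^2 = dist (x i) (y i)^2 := by rw [Real.dist_eq, sq_abs]
    _ ≤ ∑ j, dist (x j) (y j)^2 :=
      Finset.single_le_sum (f := fun j => dist (x j) (y j)^2) (fun j _ => sq_nonneg _)
        (Finset.mem_univ i)

lemma two_coord_le_dist (x y : EuclideanSpace ℝ (Fin n)) {i j : Fin n} (hij : i ≠ j) {ε : ℝ}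
    (hi : ε ≤ |x i - y i|) (hj : ε ≤ |x j - y j|) (hε : 0 ≤ ε) :
    ε * Real.sqrt 2 ≤ dist x y := by
  rw [EuclideanSpace.dist_eq]
  have h2 : ε * Real.sqrt 2 = Real.sqrt (ε^2 + ε^2) := by
    rw [show ε^2+ε^2 = 2*ε^2 by ring, Real.sqrt_mul (by norm_num), Real.sqrt_sq hε]; ring
  rw [h2]
  apply Real.sqrt_le_sqrt
  have key : ε^2 + ε^2 ≤ dist (x i) (y i)^2 + dist (x j) (y j)^2 := by
    have h1 : ε^2 ≤ dist (x i) (y i)^2 := by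
      rw [Real.dist_eq]; nlinarith [abs_nonneg (x i - y i)]
    have h2 : ε^2 ≤ dist (x j) (y j)^2 := by
      rw [Real.dist_eq]; nlinarith [abs_nonneg (x j - y j)]
    linarith
  refine le_trans key ?_
  have : dist (x i) (y i)^2 + dist (x j) (y j)^2 = ∑ l ∈ {i, j}, dist (x l) (y l)^2 := by
    rw [Finset.sum_pair hij]
  rw [this]
  exact Finset.sum_le_sum_of_subset_of_nonneg (Finset.subset_univ _) (fun l _ _ => sq_nonneg _)

lemma dist_le_of_coord (x y : EuclideanSpace ℝ (Fin n)) {ε : ℝ} (hε : 0 ≤ ε)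
    (h : ∀ i, |x i - y i| ≤ ε) : dist x y ≤ ε * Real.sqrt n := by
  rw [EuclideanSpace.dist_eq]
  have hs : ∑ j, dist (x j) (y j)^2 ≤ ∑ _j : Fin n, ε^2 := by
    apply Finset.sum_le_sum
    intro j _
    rw [Real.dist_eq]
    nlinarith [abs_nonneg (x j - y j), h j]
  refine le_trans (Real.sqrt_le_sqrt hs) ?_
  rw [Finset.sum_const, Finset.card_univ, Fintype.card_fin, nsmul_eq_mul,
    Real.sqrt_mul (by positivity), Real.sqrt_sq hε]
  ring_nf
  exact le_refl _

lemma dist_single_coord (x y : EuclideanSpace ℝ (Fin n)) (i : Fin n)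
    (h : ∀ j, j ≠ i → x j = y j) : dist x y = |x i - y i| := by
  rw [EuclideanSpace.dist_eq]
  have hs : ∑ j, dist (x j) (y j)^2 = dist (x i) (y i)^2 := by
    apply Finset.sum_eq_single
    · intro j _ hj; rw [h j hj]; simp
    · intro h'; exact absurd (Finset.mem_univ i) h'
  rw [hs, Real.dist_eq, Real.sqrt_sq_eq_abs, abs_abs]

lemma one_lt_sqrt_two : (1:ℝ) < Real.sqrt 2 := by
  rw [show (1:ℝ) = Real.sqrt 1 by simp]
  exact Real.sqrt_lt_sqrt (by norm_num) (by norm_num)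

lemma aux_top (β e : ℝ) (hβ : 0 < β) :
    Filter.Tendsto (fun k : ℕ => k * β + e) Filter.atTop Filter.atTop :=
  Filter.tendsto_atTop_add_const_right _ e
    (Filter.Tendsto.atTop_mul_const hβ tendsto_natCast_atTop_atTop)

lemma aux_tendsto (β e C L : ℝ) (hβ : 0 < β) (g : ℕ → ℝ)
    (hg : Filter.Tendsto (fun k => g k / (k * β)) Filter.atTop (nhds L)) :
    Filter.Tendsto (fun k => (g k + C) / (k * β + e)) Filter.atTop (nhds L) := by
  have htop := aux_top β e hβ
  have h1 : Filter.Tendsto (fun k : ℕ => C / (k * β + e)) Filter.atTop (nhds 0) :=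
    Filter.Tendsto.div_atTop tendsto_const_nhds htop
  have h0 : Filter.Tendsto (fun k : ℕ => e / (k * β + e)) Filter.atTop (nhds 0) :=
    Filter.Tendsto.div_atTop tendsto_const_nhds htop
  have h2 : Filter.Tendsto (fun k : ℕ => (k * β) / (k * β + e)) Filter.atTop (nhds 1) := by
    have heq : ∀ᶠ k : ℕ in Filter.atTop, 1 - e / (k * β + e) = (k * β) / (k * β + e) := by
      filter_upwards [htop.eventually_gt_atTop 0] with k hk
      field_simp
      ring
    have h3 := (tendsto_const_nhds (x := (1:ℝ)) (f := Filter.atTop)).sub h0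
    rw [sub_zero] at h3
    exact Filter.Tendsto.congr' heq h3
  have hmain := (hg.mul h2).add h1
  rw [mul_one, add_zero] at hmain
  apply Filter.Tendsto.congr' _ hmain
  filter_upwards [htop.eventually_gt_atTop 0, Filter.eventually_gt_atTop 0] with k hk1 hk2
  have hkβ : (k:ℝ) * β ≠ 0 := by positivity
  field_simp

end CoordAux

namespace FinDim

section AbstractAux
variable {X : Type*} [MetricSpace X]

lemma coverDiam_set_eq (U : Finset (Finset X)) :
    {r : ℝ | ∃ V ∈ U, r = Metric.diam (V : Set X)}
      = ↑(U.image (fun V : Finset X => Metric.diam (V : Set X))) := by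
  ext r; simp [eq_comm]

lemma le_coverDiam {U : Finset (Finset X)} {V : Finset X} (hV : V ∈ U) :
    Metric.diam (V : Set X) ≤ coverDiam U := by
  rw [coverDiam, coverDiam_set_eq]
  exact le_csSup (Finset.bddAbove _) (by rw [Finset.coe_image]; exact ⟨V, hV, rfl⟩)

lemma coverDiam_le_s19 {U : Finset (Finset X)} (hU : U.Nonempty) {m : ℝ}
    (h : ∀ V ∈ U, Metric.diam (V : Set X) ≤ m) : coverDiam U ≤ m := by
  rw [coverDiam]
  apply csSup_le
  · obtain ⟨V, hV⟩ := hU; exact ⟨_, V, hV, rfl⟩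
  · rintro r ⟨V, hV, rfl⟩; exact h V hV

variable {F : Finset X} {ε : ℝ}

lemma pair_cover_exists (hε : 0 < ε)
    (hnbr : ∀ p ∈ F, ∃ q ∈ F, q ≠ p ∧ dist p q = ε) :
    ∃ U : Finset (Finset X), IsTwoCover F U ∧ (∀ V ∈ U, Metric.diam (V : Set X) = ε)
      ∧ U.card ≤ F.card := by
  classical
  have hch : ∀ p : X, ∃ V : Finset X,
      p ∈ F → V ⊆ F ∧ 2 ≤ V.card ∧ p ∈ V ∧ Metric.diam (V : Set X) = ε := by
    intro p
    by_cases hp : p ∈ F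
    · obtain ⟨q, hq, hqp, hd⟩ := hnbr p hp
      refine ⟨{p, q}, fun _ => ⟨?_, ?_, ?_, ?_⟩⟩
      · intro x hx
        rcases Finset.mem_insert.1 hx with h | h
        · exact h ▸ hp
        · exact (Finset.mem_singleton.1 h) ▸ hq
      · rw [Finset.card_pair (Ne.symm hqp)]
      · exact Finset.mem_insert_self _ _
      · rw [Finset.coe_insert, Finset.coe_singleton, Metric.diam_pair, hd]
    · exact ⟨∅, fun h => absurd h hp⟩
  choose f hf using hch
  refine ⟨F.image f, ⟨?_, ?_, ?_⟩, ?_, Finset.card_image_le⟩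
  · intro V hV; obtain ⟨p, hp, rfl⟩ := Finset.mem_image.1 hV; exact (hf p hp).1
  · intro V hV; obtain ⟨p, hp, rfl⟩ := Finset.mem_image.1 hV; exact (hf p hp).2.1
  · intro a ha; exact ⟨f a, Finset.mem_image_of_mem f ha, (hf a ha).2.2.1⟩
  · intro V hV; obtain ⟨p, hp, rfl⟩ := Finset.mem_image.1 hV; exact (hf p hp).2.2.2

lemma twoCover_nonempty {U : Finset (Finset X)} (hF : F.Nonempty) (hU : IsTwoCover F U) :
    U.Nonempty := by
  obtain ⟨a, ha⟩ := hF
  obtain ⟨V, hV, -⟩ := hU.2.2 a ha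
  exact ⟨V, hV⟩

lemma eps_le_coverDiam (hF : F.Nonempty)
    (hsep : ∀ p ∈ F, ∀ q ∈ F, p ≠ q → ε ≤ dist p q)
    {U : Finset (Finset X)} (hU : IsTwoCover F U) : ε ≤ coverDiam U := by
  obtain ⟨a, ha⟩ := hF
  obtain ⟨V, hV, haV⟩ := hU.2.2 a ha
  obtain ⟨b, hbV, hba⟩ := Finset.exists_mem_ne (s := V)
    (by have := hU.2.1 V hV; omega) a
  have hab : ε ≤ dist a b := hsep a (hU.1 V hV haV) b (hU.1 V hV hbV) (Ne.symm hba)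
  calc ε ≤ dist a b := hab
    _ ≤ Metric.diam (V : Set X) :=
        Metric.dist_le_diam_of_mem (V.finite_toSet.isBounded) haV hbV
    _ ≤ coverDiam U := le_coverDiam hV

lemma nablaF_eq (hε : 0 < ε) (hF : F.Nonempty)
    (hsep : ∀ p ∈ F, ∀ q ∈ F, p ≠ q → ε ≤ dist p q)
    (hnbr : ∀ p ∈ F, ∃ q ∈ F, q ≠ p ∧ dist p q = ε) : nablaF F = ε := by
  obtain ⟨U₀, hU₀, hd₀, -⟩ := pair_cover_exists hε hnbr
  have hcd₀ : coverDiam U₀ = ε := by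
    apply le_antisymm
    · exact coverDiam_le_s19 (twoCover_nonempty hF hU₀) (fun V hV => le_of_eq (hd₀ V hV))
    · exact eps_le_coverDiam hF hsep hU₀
  apply le_antisymm
  · exact csInf_le ⟨ε, fun r ⟨U, hU, hr⟩ => hr ▸ eps_le_coverDiam hF hsep hU⟩
      ⟨U₀, hU₀, hcd₀.symm⟩
  · exact le_csInf ⟨ε, U₀, hU₀, hcd₀.symm⟩ (fun r ⟨U, hU, hr⟩ => hr ▸ eps_le_coverDiam hF hsep hU)

lemma eps_le_diam_member
    (hsep : ∀ p ∈ F, ∀ q ∈ F, p ≠ q → ε ≤ dist p q)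
    {U : Finset (Finset X)} (hU : IsTwoCover F U) {V : Finset X} (hV : V ∈ U) :
    ε ≤ Metric.diam (V : Set X) := by
  obtain ⟨a, haV⟩ := Finset.card_pos.1 (show 0 < V.card by have := hU.2.1 V hV; omega)
  obtain ⟨b, hbV, hba⟩ := Finset.exists_mem_ne (s := V)
    (by have := hU.2.1 V hV; omega) a
  calc ε ≤ dist a b := hsep a (hU.1 V hV haV) b (hU.1 V hV hbV) (Ne.symm hba)
    _ ≤ Metric.diam (V : Set X) :=
      Metric.dist_le_diam_of_mem V.finite_toSet.isBounded haV hbV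

lemma exists_opt_cover (hε : 0 < ε) (hF : F.Nonempty)
    (hsep : ∀ p ∈ F, ∀ q ∈ F, p ≠ q → ε ≤ dist p q)
    (hnbr : ∀ p ∈ F, ∃ q ∈ F, q ≠ p ∧ dist p q = ε) :
    ∃ U : Finset (Finset X), IsTwoCover F U ∧ coverDiam U = ε ∧ U.card ≤ F.card := by
  obtain ⟨U₀, hU₀, hd₀, hc₀⟩ := pair_cover_exists hε hnbr
  exact ⟨U₀, hU₀, le_antisymm
    (coverDiam_le_s19 (twoCover_nonempty hF hU₀) (fun V hV => le_of_eq (hd₀ V hV)))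
    (eps_le_coverDiam hF hsep hU₀), hc₀⟩

lemma cover_member_eq
    (hsep : ∀ p ∈ F, ∀ q ∈ F, p ≠ q → ε ≤ dist p q)
    (htri : ∀ p ∈ F, ∀ q ∈ F, ∀ r ∈ F, p ≠ q → p ≠ r → q ≠ r →
      dist p q ≤ ε → dist p r ≤ ε → dist q r ≤ ε → False)
    {U : Finset (Finset X)} (hU : IsTwoCover F U) (hcd : coverDiam U = ε) :
    ∀ V ∈ U, Metric.diam (V : Set X) = ε ∧ V.card = 2 := by
  intro V hV
  have hdV : Metric.diam (V : Set X) = ε :=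
    le_antisymm (hcd ▸ le_coverDiam hV) (eps_le_diam_member hsep hU hV)
  refine ⟨hdV, le_antisymm ?_ (hU.2.1 V hV)⟩
  by_contra hlt
  push_neg at hlt
  obtain ⟨a, b, c, haV, hbV, hcV, hab, hac, hbc⟩ := Finset.two_lt_card_iff.1 hlt
  have hsubF := hU.1 V hV
  exact htri a (hsubF haV) b (hsubF hbV) c (hsubF hcV) hab hac hbc
    (hdV ▸ Metric.dist_le_diam_of_mem V.finite_toSet.isBounded haV hbV)
    (hdV ▸ Metric.dist_le_diam_of_mem V.finite_toSet.isBounded haV hcV)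
    (hdV ▸ Metric.dist_le_diam_of_mem V.finite_toSet.isBounded hbV hcV)

lemma Hcov_eq_card {U : Finset (Finset X)} (s : ℝ)
    (h : ∀ V ∈ U, Metric.diam (V : Set X) = ε) : Hcov U s = U.card * ε ^ s := by
  rw [Hcov]
  rw [Finset.sum_congr rfl (fun V hV => by rw [h V hV])]
  rw [Finset.sum_const, nsmul_eq_mul]

variable (hε : 0 < ε) (hF : F.Nonempty)
  (hsep : ∀ p ∈ F, ∀ q ∈ F, p ≠ q → ε ≤ dist p q)
  (hnbr : ∀ p ∈ F, ∃ q ∈ F, q ≠ p ∧ dist p q = ε)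
  (htri : ∀ p ∈ F, ∀ q ∈ F, ∀ r ∈ F, p ≠ q → p ≠ r → q ≠ r →
      dist p q ≤ ε → dist p r ≤ ε → dist q r ≤ ε → False)

include hε hF hsep hnbr

lemma Tmin_spec :
    (∃ U : Finset (Finset X), IsTwoCover F U ∧ coverDiam U = ε ∧ U.card = Tmin F) ∧
    (∀ U : Finset (Finset X), IsTwoCover F U → coverDiam U = ε → Tmin F ≤ U.card) ∧
    Tmin F ≤ F.card := by
  have hnab : nablaF F = ε := nablaF_eq hε hF hsep hnbr
  have hset : {t : ℕ | ∃ U : Finset (Finset X),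
      IsTwoCover F U ∧ coverDiam U = nablaF F ∧ U.card = t}
      = {t : ℕ | ∃ U : Finset (Finset X), IsTwoCover F U ∧ coverDiam U = ε ∧ U.card = t} := by
    rw [hnab]
  obtain ⟨U₀, hU₀, hcd₀, hc₀⟩ := exists_opt_cover hε hF hsep hnbr
  have hne : {t : ℕ | ∃ U : Finset (Finset X),
      IsTwoCover F U ∧ coverDiam U = ε ∧ U.card = t}.Nonempty := ⟨U₀.card, U₀, hU₀, hcd₀, rfl⟩
  refine ⟨?_, ?_, ?_⟩
  · have hT : Tmin F = sInf {t : ℕ | ∃ U : Finset (Finset X),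
        IsTwoCover F U ∧ coverDiam U = ε ∧ U.card = t} := by rw [Tmin, hset]
    have hmem := Nat.sInf_mem hne
    rw [← hT] at hmem
    obtain ⟨U, hU, hcd, hc⟩ := hmem
    exact ⟨U, hU, hcd, hc⟩
  · intro U hU hcd
    rw [Tmin, hset]
    exact Nat.sInf_le ⟨U, hU, hcd, rfl⟩
  · rw [Tmin, hset]
    exact le_trans (Nat.sInf_le ⟨U₀, hU₀, hcd₀, rfl⟩) hc₀

include htri in
lemma HH_eq (s : ℝ) : HH F s = (Tmin F : ℝ) * ε ^ s := by
  have hnab : nablaF F = ε := nablaF_eq hε hF hsep hnbr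
  obtain ⟨⟨Uopt, hUopt, hcdopt, hcopt⟩, hmin, -⟩ := Tmin_spec hε hF hsep hnbr
  have hset : {h : ℝ | ∃ U : Finset (Finset X),
      IsTwoCover F U ∧ coverDiam U = nablaF F ∧ h = Hcov U s}
      = {h : ℝ | ∃ U : Finset (Finset X),
      IsTwoCover F U ∧ coverDiam U = ε ∧ h = Hcov U s} := by rw [hnab]
  have hrp : (0:ℝ) < ε ^ s := Real.rpow_pos_of_pos hε s
  have hHc : ∀ U : Finset (Finset X), IsTwoCover F U → coverDiam U = ε →
      Hcov U s = U.card * ε ^ s := fun U hU hcd =>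
    Hcov_eq_card s (fun V hV => (cover_member_eq hsep htri hU hcd V hV).1)
  have hlb : ∀ h ∈ {h : ℝ | ∃ U : Finset (Finset X),
      IsTwoCover F U ∧ coverDiam U = ε ∧ h = Hcov U s}, (Tmin F : ℝ) * ε ^ s ≤ h := by
    rintro h ⟨U, hU, hcd, rfl⟩
    rw [hHc U hU hcd]
    exact mul_le_mul_of_nonneg_right (by exact_mod_cast hmin U hU hcd) hrp.le
  have hmem : (Tmin F : ℝ) * ε ^ s ∈ {h : ℝ | ∃ U : Finset (Finset X),
      IsTwoCover F U ∧ coverDiam U = ε ∧ h = Hcov U s} := by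
    refine ⟨Uopt, hUopt, hcdopt, ?_⟩
    rw [hHc Uopt hUopt hcdopt, hcopt]
  rw [HH, hset]
  exact le_antisymm (csInf_le ⟨_, hlb⟩ hmem) (le_csInf ⟨_, hmem⟩ hlb)

include htri in
lemma card_le_two_Tmin : F.card ≤ 2 * Tmin F := by
  classical
  obtain ⟨⟨Uopt, hUopt, hcdopt, hcopt⟩, -, -⟩ := Tmin_spec hε hF hsep hnbr
  have h2 : ∀ V ∈ Uopt, V.card = 2 := fun V hV =>
    (cover_member_eq hsep htri hUopt hcdopt V hV).2
  have hsub : F ⊆ Uopt.biUnion id := by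
    intro a ha; obtain ⟨V, hV, haV⟩ := hUopt.2.2 a ha
    exact Finset.mem_biUnion.2 ⟨V, hV, haV⟩
  calc F.card ≤ (Uopt.biUnion id).card := Finset.card_le_card hsub
    _ ≤ ∑ V ∈ Uopt, (id V).card := Finset.card_biUnion_le
    _ = ∑ _V ∈ Uopt, 2 := Finset.sum_congr rfl (fun V hV => h2 V hV)
    _ = 2 * Uopt.card := by rw [Finset.sum_const, smul_eq_mul, mul_comm]
    _ = 2 * Tmin F := by rw [hcopt]

include htri in
lemma two_le_Tmin (hcard : 3 ≤ F.card) : 2 ≤ Tmin F := by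
  have := card_le_two_Tmin hε hF hsep hnbr htri
  omega

omit hε hF hsep hnbr in
lemma logEq (T : ℕ) (Δ s : ℝ) (hε : 0 < ε) (hΔ : 0 < Δ) (hT : 0 < T) :
    ((T:ℝ) * ε ^ s = Δ ^ s) ↔ Real.log T = s * (Real.log Δ - Real.log ε) := by
  have hT0 : (0:ℝ) < T := by exact_mod_cast hT
  have h1 : Real.log ((T:ℝ) * ε^s) = Real.log T + s * Real.log ε := by
    rw [Real.log_mul (by positivity) (by positivity), Real.log_rpow hε]
  have h2 : Real.log (Δ^s) = s * Real.log Δ := Real.log_rpow hΔ s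
  constructor
  · intro h; have h3 := congrArg Real.log h; rw [h1, h2] at h3; linarith
  · intro h
    apply Real.log_injOn_pos (Set.mem_Ioi.2 (by positivity))
      (Set.mem_Ioi.2 (Real.rpow_pos_of_pos hΔ s))
    rw [h1, h2]; linarith

include htri in
lemma dimfH_eq (hcard : 3 ≤ F.card) (hdlt : ε < Metric.diam (F : Set X)) :
    dimfH F = Real.log (Tmin F) / Real.log (Metric.diam (F : Set X) / ε) := by
  set Δ := Metric.diam (F : Set X) with hΔdef
  have hΔ : 0 < Δ := lt_trans hε hdlt
  have hden : 0 < Real.log Δ - Real.log ε := sub_pos.2 (Real.log_lt_log hε hdlt)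
  have hT2 : 2 ≤ Tmin F := two_le_Tmin hε hF hsep hnbr htri hcard
  have hlogT : 0 < Real.log (Tmin F) := by
    apply Real.log_pos; exact_mod_cast Nat.lt_of_lt_of_le Nat.one_lt_two hT2
  set s₀ := Real.log (Tmin F) / (Real.log Δ - Real.log ε) with hs₀
  have hset : {s : ℝ | 0 < s ∧ HH F s = Δ ^ s} = {s₀} := by
    ext s
    simp only [Set.mem_setOf_eq, Set.mem_singleton_iff]
    rw [HH_eq hε hF hsep hnbr htri s,
      logEq (Tmin F) Δ s hε hΔ (by omega)]
    constructor
    · rintro ⟨hs, heq⟩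
      rw [hs₀, heq]
      field_simp
    · rintro rfl
      refine ⟨div_pos hlogT hden, ?_⟩
      rw [hs₀, div_mul_cancel₀ _ (ne_of_gt hden)]
  rw [dimfH, hset, csInf_singleton, hs₀, Real.log_div (ne_of_gt hΔ) (ne_of_gt hε)]

omit hF hsep hnbr in
include hnbr in
lemma no_focal (hdlt : ε < Metric.diam (F : Set X)) : ∀ a, ¬ IsFocal F a := by
  rintro a ⟨haF, hfoc⟩
  obtain ⟨q, hqF, hqa, hdq⟩ := hnbr a haF
  have := hfoc q hqF hqa
  rw [hdq] at this
  exact absurd this (ne_of_lt hdlt)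

end AbstractAux

end FinDim

namespace FinDim

section Geom
variable {n : ℕ} {ε : ℝ} {X : Set (EuclideanSpace ℝ (Fin n))}

/-- corner point of the cube `m` selected by `b`. -/
def cpt (n : ℕ) (ε : ℝ) (m : Fin n → ℤ) (b : Fin n → Bool) : EuclideanSpace ℝ (Fin n) :=
  WithLp.toLp 2 (fun i => ε * ((m i : ℝ) + if b i then 1 else 0))

lemma cpt_mem_corners (m : Fin n → ℤ) (b : Fin n → Bool) : cpt n ε m b ∈ corners n ε m := by
  intro i
  by_cases h : b i
  · right; simp [cpt, h]
  · left; simp [cpt, h]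

lemma corners_eq_cpt (hε : 0 < ε) {m : Fin n → ℤ} {p : EuclideanSpace ℝ (Fin n)}
    (hp : p ∈ corners n ε m) : ∃ b : Fin n → Bool, p = cpt n ε m b := by
  classical
  refine ⟨fun i => decide (p i = ε * ((m i : ℝ) + 1)), PiLp.ext fun i => ?_⟩
  rcases hp i with h | h
  · have hne : p i ≠ ε * ((m i : ℝ) + 1) := by
      rw [h]; intro hc
      have : ε * (m i : ℝ) < ε * ((m i : ℝ) + 1) := by nlinarith
      linarith [hc ▸ this]
    have hd : (decide (p i = ε * ((m i : ℝ) + 1))) = false := decide_eq_false hne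
    simp [cpt, hd, h]
    exact (em (ε = 0)).symm
  · simp [cpt, h]

lemma lattice_coord (hp : p ∈ latticeApprox n X ε) (i : Fin n) :
    ∃ z : ℤ, p i = ε * (z : ℝ) := by
  obtain ⟨m, -, hc⟩ := hp
  rcases hc i with h | h
  · exact ⟨m i, h⟩
  · exact ⟨m i + 1, by rw [h]; push_cast; ring⟩

lemma lattice_coord_gap (hε : 0 < ε) {p q : EuclideanSpace ℝ (Fin n)}
    (hp : p ∈ latticeApprox n X ε) (hq : q ∈ latticeApprox n X ε) {i : Fin n}
    (hne : p i ≠ q i) : ε ≤ |p i - q i| := by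
  obtain ⟨z, hz⟩ := lattice_coord hp i
  obtain ⟨w, hw⟩ := lattice_coord hq i
  have hzw : z ≠ w := by rintro rfl; exact hne (hz.trans hw.symm)
  have h1 : (1:ℝ) ≤ |(z:ℝ) - (w:ℝ)| := by
    have h0 : (1:ℤ) ≤ |z - w| := Int.one_le_abs (sub_ne_zero.2 hzw)
    exact_mod_cast h0
  calc ε = ε * 1 := (mul_one ε).symm
    _ ≤ ε * |(z:ℝ) - w| := by nlinarith
    _ = |ε * ((z:ℝ) - w)| := by rw [abs_mul, abs_of_pos hε]
    _ = |p i - q i| := by rw [hz, hw]; ring_nf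

lemma lattice_sep (hε : 0 < ε) {p q : EuclideanSpace ℝ (Fin n)}
    (hp : p ∈ latticeApprox n X ε) (hq : q ∈ latticeApprox n X ε) (hne : p ≠ q) :
    ε ≤ dist p q := by
  have : ∃ i, p i ≠ q i := by
    by_contra h; push_neg at h; exact hne (PiLp.ext h)
  obtain ⟨i, hi⟩ := this
  exact le_trans (lattice_coord_gap hε hp hq hi) (coord_le_dist p q i)

lemma lattice_close (hε : 0 < ε) {p q : EuclideanSpace ℝ (Fin n)}
    (hp : p ∈ latticeApprox n X ε) (hq : q ∈ latticeApprox n X ε) (hne : p ≠ q)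
    (hd : dist p q ≤ ε) :
    ∃ i, |p i - q i| = ε ∧ ∀ j, j ≠ i → p j = q j := by
  have : ∃ i, p i ≠ q i := by
    by_contra h; push_neg at h; exact hne (PiLp.ext h)
  obtain ⟨i, hi⟩ := this
  refine ⟨i, ?_, ?_⟩
  · exact le_antisymm (le_trans (coord_le_dist p q i) hd) (lattice_coord_gap hε hp hq hi)
  · intro j hj
    by_contra hj'
    have h2 : ε * Real.sqrt 2 ≤ dist p q := two_coord_le_dist p q (Ne.symm hj)
      (lattice_coord_gap hε hp hq hi) (lattice_coord_gap hε hp hq hj') hε.le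
    nlinarith [one_lt_sqrt_two]

lemma lattice_tri (hε : 0 < ε) {p q r : EuclideanSpace ℝ (Fin n)}
    (hp : p ∈ latticeApprox n X ε) (hq : q ∈ latticeApprox n X ε)
    (hr : r ∈ latticeApprox n X ε)
    (hpq : p ≠ q) (hpr : p ≠ r) (hqr : q ≠ r)
    (dpq : dist p q ≤ ε) (dpr : dist p r ≤ ε) (dqr : dist q r ≤ ε) : False := by
  obtain ⟨i, hiε, hioff⟩ := lattice_close hε hp hq hpq dpq
  obtain ⟨j, hjε, hjoff⟩ := lattice_close hε hq hr hqr dqr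
  by_cases hij : i = j
  · subst hij
    have hpi : p i ≠ r i := by
      intro hpr'
      apply hpr
      refine PiLp.ext fun l => ?_
      by_cases hl : l = i
      · exact hl ▸ hpr'
      · rw [hioff l hl, hjoff l hl]
    rcases abs_eq hε.le |>.1 hiε with h1 | h1 <;>
      rcases abs_eq hε.le |>.1 hjε with h2 | h2
    · have : |p i - r i| = 2 * ε := by rw [abs_of_pos (by linarith)]; linarith
      have h3 := le_trans (coord_le_dist p r i) dpr
      rw [this] at h3; linarith
    · exact hpi (by linarith)
    · exact hpi (by linarith)
    · have : |p i - r i| = 2 * ε := by rw [abs_of_neg (by linarith)]; linarith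
      have h3 := le_trans (coord_le_dist p r i) dpr
      rw [this] at h3; linarith
  · -- i ≠ j : p and r differ in both coordinates i and j
    have hri : |p i - r i| = ε := by rw [← hjoff i hij]; exact hiε
    have hrj : |p j - r j| = ε := by rw [hioff j (fun h => hij h.symm)]; exact hjε
    have h2 : ε * Real.sqrt 2 ≤ dist p r :=
      two_coord_le_dist p r hij (le_of_eq hri.symm) (le_of_eq hrj.symm) hε.le
    nlinarith [one_lt_sqrt_two]

lemma cpt_mem_lattice {m : Fin n → ℤ} (hm : (cube n ε m ∩ X).Nonempty) (b : Fin n → Bool) :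
    cpt n ε m b ∈ latticeApprox n X ε :=
  ⟨m, hm, cpt_mem_corners m b⟩

lemma lattice_nbr (hε : 0 < ε) (hn : 0 < n) {p : EuclideanSpace ℝ (Fin n)}
    (hp : p ∈ latticeApprox n X ε) :
    ∃ q ∈ latticeApprox n X ε, q ≠ p ∧ dist p q = ε := by
  classical
  obtain ⟨m, hm, hc⟩ := hp
  obtain ⟨b, rfl⟩ := corners_eq_cpt hε hc
  set i₀ : Fin n := ⟨0, hn⟩
  set q := cpt n ε m (Function.update b i₀ (!b i₀)) with hq
  have hoff : ∀ j, j ≠ i₀ → cpt n ε m b j = q j := by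
    intro j hj
    simp [hq, cpt, Function.update_of_ne hj]
  have hcoord : |cpt n ε m b i₀ - q i₀| = ε := by
    have hval : cpt n ε m b i₀ - q i₀ = if b i₀ then ε else -ε := by
      simp only [hq, cpt, PiLp.toLp_apply, Function.update_self]
      cases hb : b i₀ <;> simp <;> ring
    rw [hval]
    cases hb : b i₀
    · simp [abs_of_pos hε]
    · simp [abs_of_pos hε]
  refine ⟨q, cpt_mem_lattice hm _, ?_, ?_⟩
  · intro hqp
    have := congrArg (fun v : EuclideanSpace ℝ (Fin n) => v i₀) hqp
    rw [← this] at hcoord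
    simp at hcoord
    first
      | exact hε.ne' hcoord
      | exact hε.ne hcoord.symm
      | linarith
  · rw [dist_single_coord _ _ i₀ (fun j hj => (hoff j hj).symm ▸ rfl), hcoord]

lemma mem_cube_floor (hε : 0 < ε) (x : EuclideanSpace ℝ (Fin n)) :
    x ∈ cube n ε (fun i => ⌊x i / ε⌋) := by
  intro i
  constructor
  · calc ε * (⌊x i / ε⌋ : ℝ) ≤ ε * (x i / ε) :=
        mul_le_mul_of_nonneg_left (Int.floor_le _) hε.le
      _ = x i := by field_simp
  · calc x i = ε * (x i / ε) := by field_simp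
      _ ≤ ε * ((⌊x i / ε⌋ : ℝ) + 1) :=
        mul_le_mul_of_nonneg_left (le_of_lt (Int.lt_floor_add_one _)) hε.le

lemma corner_dist_le (hε : 0 < ε) {m : Fin n → ℤ} {x p : EuclideanSpace ℝ (Fin n)}
    (hx : x ∈ cube n ε m) (hp : p ∈ corners n ε m) : dist x p ≤ ε * Real.sqrt n := by
  apply dist_le_of_coord x p hε.le
  intro i
  obtain ⟨h1, h2⟩ := hx i
  rcases hp i with h | h <;> rw [h] <;> rw [abs_le] <;> constructor <;> nlinarith

/-- every point of `X` has a lattice point within `ε√n`. -/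
lemma exists_lattice_near (hε : 0 < ε) {x : EuclideanSpace ℝ (Fin n)} (hx : x ∈ X) :
    ∃ p ∈ latticeApprox n X ε, dist x p ≤ ε * Real.sqrt n := by
  set m := fun i => ⌊x i / ε⌋
  have hcube : x ∈ cube n ε m := mem_cube_floor hε x
  have hm : (cube n ε m ∩ X).Nonempty := ⟨x, hcube, hx⟩
  refine ⟨cpt n ε m (fun _ => false), cpt_mem_lattice hm _,
    corner_dist_le hε hcube (cpt_mem_corners m _)⟩

/-- every lattice point has a point of `X` within `ε√n`. -/
lemma exists_X_near (hε : 0 < ε) {p : EuclideanSpace ℝ (Fin n)}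
    (hp : p ∈ latticeApprox n X ε) : ∃ x ∈ X, dist p x ≤ ε * Real.sqrt n := by
  obtain ⟨m, ⟨x, hxc, hxX⟩, hc⟩ := hp
  exact ⟨x, hxX, by rw [dist_comm]; exact corner_dist_le hε hxc hc⟩

lemma lattice_diam_le (hε : 0 < ε) (hXb : Bornology.IsBounded X) :
    Metric.diam (latticeApprox n X ε) ≤ Metric.diam X + 2 * (ε * Real.sqrt n) := by
  apply Metric.diam_le_of_forall_dist_le
    (by positivity)
  intro p hp q hq
  obtain ⟨x, hxX, hxp⟩ := exists_X_near hε hp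
  obtain ⟨y, hyX, hyq⟩ := exists_X_near hε hq
  calc dist p q ≤ dist p x + dist x y + dist y q := dist_triangle4 p x y q
    _ ≤ ε * Real.sqrt n + Metric.diam X + ε * Real.sqrt n := by
        gcongr
        · exact Metric.dist_le_diam_of_mem hXb hxX hyX
        · rw [dist_comm]; exact hyq
    _ = Metric.diam X + 2 * (ε * Real.sqrt n) := by ring

lemma exists_far_points (hd : 0 < Metric.diam X) :
    ∃ x ∈ X, ∃ y ∈ X, Metric.diam X / 2 < dist x y := by
  by_contra h
  push_neg at h
  have := Metric.diam_le_of_forall_dist_le (by linarith) h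
  linarith

/-- two lattice points far apart -/
lemma lattice_exists_far (hε : 0 < ε) (hd : 0 < Metric.diam X) :
    ∃ p ∈ latticeApprox n X ε, ∃ q ∈ latticeApprox n X ε,
      Metric.diam X / 2 - 2 * (ε * Real.sqrt n) < dist p q := by
  obtain ⟨x, hxX, y, hyX, hxy⟩ := exists_far_points hd
  obtain ⟨p, hp, hxp⟩ := exists_lattice_near hε hxX
  obtain ⟨q, hq, hyq⟩ := exists_lattice_near hε hyX
  refine ⟨p, hp, q, hq, ?_⟩
  have h4 := dist_triangle4 x p q y
  have h5 : dist x y ≤ dist x p + dist p q + dist y q := by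
    rw [dist_comm y q]; exact h4
  linarith

lemma meets_finite (hε : 0 < ε) (hXb : Bornology.IsBounded X) :
    {m : Fin n → ℤ | (cube n ε m ∩ X).Nonempty}.Finite := by
  obtain ⟨R, hR⟩ := isBounded_iff_forall_norm_le.1 hXb
  apply Set.Finite.subset
    (Set.Finite.pi (fun i : Fin n => Set.finite_Icc (⌊(-R)/ε⌋ - 1) ⌈R/ε⌉))
  rintro m ⟨x, hxc, hxX⟩
  intro i _
  have hxi : |x i| ≤ R := by
    have h0 : |x i - (0 : EuclideanSpace ℝ (Fin n)) i| ≤ dist x 0 := coord_le_dist x 0 i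
    have hz : (0 : EuclideanSpace ℝ (Fin n)) i = 0 := rfl
    rw [hz, sub_zero, dist_zero_right] at h0
    exact le_trans h0 (hR x hxX)
  obtain ⟨h1, h2⟩ := hxc i
  rw [abs_le] at hxi
  constructor
  · -- ⌊(-R)/ε⌋ - 1 ≤ m i
    have hle : (-R)/ε ≤ (m i : ℝ) + 1 := by
      rw [div_le_iff₀ hε]
      nlinarith
    have : ((⌊(-R)/ε⌋ : ℤ) : ℝ) ≤ (m i : ℝ) + 1 := le_trans (Int.floor_le _) hle
    have : (⌊(-R)/ε⌋ : ℤ) ≤ m i + 1 := by exact_mod_cast this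
    omega
  · -- m i ≤ ⌈R/ε⌉
    have hle : (m i : ℝ) ≤ R/ε := by
      rw [le_div_iff₀ hε]
      nlinarith
    have : (m i : ℝ) ≤ ((⌈R/ε⌉ : ℤ) : ℝ) := le_trans hle (Int.le_ceil _)
    exact_mod_cast this

lemma meets_nonempty {x : EuclideanSpace ℝ (Fin n)} (hε : 0 < ε) (hx : x ∈ X) :
    {m : Fin n → ℤ | (cube n ε m ∩ X).Nonempty}.Nonempty :=
  ⟨fun i => ⌊x i / ε⌋, x, mem_cube_floor hε x, hx⟩

lemma ncard_le_cardF (hε : 0 < ε) {F : Finset (EuclideanSpace ℝ (Fin n))}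
    (hF : (F : Set (EuclideanSpace ℝ (Fin n))) = latticeApprox n X ε) :
    {m : Fin n → ℤ | (cube n ε m ∩ X).Nonempty}.ncard ≤ F.card := by
  classical
  set S := {m : Fin n → ℤ | (cube n ε m ∩ X).Nonempty}
  set g := fun m : Fin n → ℤ => cpt n ε m (fun _ => false)
  have hinj : Set.InjOn g S := by
    intro m hm m' hm' heq
    funext i
    have := congrArg (fun v : EuclideanSpace ℝ (Fin n) => v i) heq
    simp only [g, cpt, PiLp.toLp_apply, Bool.false_eq_true, if_false, add_zero] at this
    exact_mod_cast mul_left_cancel₀ (ne_of_gt hε) this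
  have hsub : g '' S ⊆ (F : Set (EuclideanSpace ℝ (Fin n))) := by
    rintro _ ⟨m, hm, rfl⟩
    rw [hF]
    exact cpt_mem_lattice hm _
  calc S.ncard = (g '' S).ncard := (Set.ncard_image_of_injOn hinj).symm
    _ ≤ (F : Set (EuclideanSpace ℝ (Fin n))).ncard :=
        Set.ncard_le_ncard hsub F.finite_toSet
    _ = F.card := Set.ncard_coe_finset F

lemma cardF_le_ncard (hε : 0 < ε) (hXb : Bornology.IsBounded X)
    {F : Finset (EuclideanSpace ℝ (Fin n))}
    (hF : (F : Set (EuclideanSpace ℝ (Fin n))) = latticeApprox n X ε) :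
    F.card ≤ 2 ^ n * {m : Fin n → ℤ | (cube n ε m ∩ X).Nonempty}.ncard := by
  classical
  have hfin := meets_finite hε hXb
  set Sf := hfin.toFinset with hSf
  have hsub : F ⊆ Sf.biUnion (fun m => Finset.image (cpt n ε m) Finset.univ) := by
    intro p hp
    have hp' : p ∈ latticeApprox n X ε := by rw [← hF]; exact_mod_cast hp
    obtain ⟨m, hm, hc⟩ := hp'
    obtain ⟨b, rfl⟩ := corners_eq_cpt hε hc
    apply Finset.mem_biUnion.2
    exact ⟨m, hfin.mem_toFinset.2 hm, Finset.mem_image.2 ⟨b, Finset.mem_univ b, rfl⟩⟩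
  calc F.card ≤ (Sf.biUnion (fun m => Finset.image (cpt n ε m) Finset.univ)).card :=
      Finset.card_le_card hsub
    _ ≤ ∑ m ∈ Sf, (Finset.image (cpt n ε m) Finset.univ).card := Finset.card_biUnion_le
    _ ≤ ∑ _m ∈ Sf, 2 ^ n := by
        apply Finset.sum_le_sum
        intro m _
        calc (Finset.image (cpt n ε m) Finset.univ).card
            ≤ (Finset.univ : Finset (Fin n → Bool)).card := Finset.card_image_le
          _ = 2 ^ n := by simp [Finset.card_univ]
    _ = Sf.card * 2 ^ n := by rw [Finset.sum_const, smul_eq_mul]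
    _ = 2 ^ n * {m : Fin n → ℤ | (cube n ε m ∩ X).Nonempty}.ncard := by
        rw [mul_comm, Set.ncard_eq_toFinset_card _ hfin]

end Geom
end FinDim



namespace FinDim

lemma scale_package {n : ℕ} {X : Set (EuclideanSpace ℝ (Fin n))} {ε : ℝ}
    (hXb : Bornology.IsBounded X) (hd : 0 < Metric.diam X) (hXne : X.Nonempty)
    (hn : 0 < n) (hε : 0 < ε)
    (hsmall : ε * (2 + 4 * Real.sqrt n) < Metric.diam X)
    {F : Finset (EuclideanSpace ℝ (Fin n))}
    (hF : (F : Set (EuclideanSpace ℝ (Fin n))) = latticeApprox n X ε) :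
    (∀ a, ¬ IsFocal F a) ∧
    dimfH F = Real.log (Tmin F) /
      Real.log (Metric.diam (F : Set (EuclideanSpace ℝ (Fin n))) / ε) ∧
    2 ≤ Tmin F ∧ F.card ≤ 2 * Tmin F ∧ Tmin F ≤ F.card ∧
    Metric.diam X / 2 - 2 * (ε * Real.sqrt n) ≤
      Metric.diam (F : Set (EuclideanSpace ℝ (Fin n))) ∧
    Metric.diam (F : Set (EuclideanSpace ℝ (Fin n))) ≤
      Metric.diam X + 2 * (ε * Real.sqrt n) ∧
    ε < Metric.diam (F : Set (EuclideanSpace ℝ (Fin n))) := by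
  have sqn : (0:ℝ) ≤ Real.sqrt n := Real.sqrt_nonneg n
  have hmemF : ∀ p, p ∈ F ↔ p ∈ latticeApprox n X ε := by
    intro p
    rw [← Finset.mem_coe, hF]
  have hsep' : ∀ p ∈ F, ∀ q ∈ F, p ≠ q → ε ≤ dist p q := fun p hp q hq hne =>
    lattice_sep hε ((hmemF p).1 hp) ((hmemF q).1 hq) hne
  have hnbr' : ∀ p ∈ F, ∃ q ∈ F, q ≠ p ∧ dist p q = ε := by
    intro p hp
    obtain ⟨q, hq, hqp, hdq⟩ := lattice_nbr hε hn ((hmemF p).1 hp)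
    exact ⟨q, (hmemF q).2 hq, hqp, hdq⟩
  have htri' : ∀ p ∈ F, ∀ q ∈ F, ∀ r ∈ F, p ≠ q → p ≠ r → q ≠ r →
      dist p q ≤ ε → dist p r ≤ ε → dist q r ≤ ε → False := by
    intro p hp q hq r hr h1 h2 h3 d1 d2 d3
    exact lattice_tri hε ((hmemF p).1 hp) ((hmemF q).1 hq) ((hmemF r).1 hr) h1 h2 h3 d1 d2 d3
  have hFne : F.Nonempty := by
    obtain ⟨x, hx⟩ := hXne
    obtain ⟨p, hp, -⟩ := exists_lattice_near (X := X) hε hx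
    exact ⟨p, (hmemF p).2 hp⟩
  have hdub : Metric.diam (F : Set (EuclideanSpace ℝ (Fin n))) ≤
      Metric.diam X + 2 * (ε * Real.sqrt n) := by
    rw [hF]; exact lattice_diam_le hε hXb
  obtain ⟨p₁, hp₁, q₁, hq₁, hfar⟩ := lattice_exists_far (X := X) hε hd
  have hdistF : dist p₁ q₁ ≤ Metric.diam (F : Set (EuclideanSpace ℝ (Fin n))) := by
    apply Metric.dist_le_diam_of_mem F.finite_toSet.isBounded
    · rw [hF]; exact hp₁
    · rw [hF]; exact hq₁
  have hdlb : Metric.diam X / 2 - 2 * (ε * Real.sqrt n) ≤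
      Metric.diam (F : Set (EuclideanSpace ℝ (Fin n))) := le_trans hfar.le hdistF
  have hεfar : ε < dist p₁ q₁ := by nlinarith
  have hεlt : ε < Metric.diam (F : Set (EuclideanSpace ℝ (Fin n))) :=
    lt_of_lt_of_le hεfar hdistF
  have hcard3 : 3 ≤ F.card := by
    classical
    have hp₁F : p₁ ∈ F := (hmemF p₁).2 hp₁
    have hq₁F : q₁ ∈ F := (hmemF q₁).2 hq₁
    obtain ⟨q', hq'F, hq'p, hdq'⟩ := hnbr' p₁ hp₁F
    have hpq : p₁ ≠ q₁ := by
      intro h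
      rw [h, dist_self] at hεfar
      linarith
    have hq'q : q' ≠ q₁ := by
      intro h
      rw [← hdq', h] at hεfar
      exact lt_irrefl _ hεfar
    have hsub : ({p₁, q', q₁} : Finset (EuclideanSpace ℝ (Fin n))) ⊆ F := by
      intro x hx
      simp only [Finset.mem_insert, Finset.mem_singleton] at hx
      rcases hx with rfl | rfl | rfl
      · exact hp₁F
      · exact hq'F
      · exact hq₁F
    have hcard : ({p₁, q', q₁} : Finset (EuclideanSpace ℝ (Fin n))).card = 3 := by
      rw [Finset.card_insert_of_notMem (by simp [Ne.symm hq'p, hpq]),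
        Finset.card_insert_of_notMem (by simp [hq'q]), Finset.card_singleton]
    calc (3:ℕ) = ({p₁, q', q₁} : Finset (EuclideanSpace ℝ (Fin n))).card := hcard.symm
      _ ≤ F.card := Finset.card_le_card hsub
  exact ⟨no_focal hε hnbr' hεlt,
    dimfH_eq hε hFne hsep' hnbr' htri' hcard3 hεlt,
    two_le_Tmin hε hFne hsep' hnbr' htri' hcard3,
    card_le_two_Tmin hε hFne hsep' hnbr' htri',
    (Tmin_spec hε hFne hsep' hnbr').2.2,
    hdlb, hdub, hεlt⟩

end FinDim

set_option maxHeartbeats 1000000 in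
open FinDim in
/-- Convergence theorem for the finite Hausdorff dimension: if moreover the
box-counting limit equals the Hausdorff dimension of `X` (e.g. `X` an IFS
attractor), then `dim_fH(F_k) → dim_H(X)`. -/
theorem stmt19 (n : ℕ) (X : Set (EuclideanSpace ℝ (Fin n))) (hX : IsCompact X)
    (hnab : nablaSet X = 0) (hdiam : 0 < Metric.diam X)
    (c : ℝ) (hc : c ∈ Set.Ioo (0 : ℝ) 1)
    (N : ℕ → ℕ)
    (hN : ∀ k, N k = Set.ncard {m : Fin n → ℤ | (cube n (c ^ k) m ∩ X).Nonempty})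
    (F : ℕ → Finset (EuclideanSpace ℝ (Fin n)))
    (hF : ∀ k, ((F k : Set (EuclideanSpace ℝ (Fin n)))) = latticeApprox n X (c ^ k))
    (L : ℝ)
    (hL : Filter.Tendsto (fun k => Real.log (N k : ℝ) / (-Real.log (c ^ k)))
      Filter.atTop (nhds L))
    (hLdim : dimH X = ENNReal.ofReal L) :
    (∃ K : ℕ, ∀ k ≥ K, ∀ a, ¬ IsFocal (F k) a) ∧
    Filter.Tendsto (fun k => dimfH (F k)) Filter.atTop (nhds L) := by
  classical
  have hXne : X.Nonempty := by
    rcases Set.eq_empty_or_nonempty X with rfl | h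
    · rw [Metric.diam_empty] at hdiam; linarith
    · exact h
  have hn : 0 < n := by
    by_contra h
    push_neg at h
    interval_cases n
    have hsub : X.Subsingleton := fun x _ y _ => PiLp.ext (fun i => Fin.elim0 i)
    rw [Metric.diam_subsingleton hsub] at hdiam
    linarith
  set d := Metric.diam X with hddef
  have sqn : (0:ℝ) ≤ Real.sqrt n := Real.sqrt_nonneg n
  set β := -Real.log c with hβdef
  have hβ : 0 < β := by
    rw [hβdef]
    exact neg_pos.2 (Real.log_neg hc.1 hc.2)
  have hεk : ∀ k : ℕ, (0:ℝ) < c ^ k := fun k => pow_pos hc.1 k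
  have hden_eq : ∀ k : ℕ, Real.log (c ^ k) = -((k:ℝ) * β) := by
    intro k
    rw [Real.log_pow, hβdef]
    ring
  have hL' : Filter.Tendsto (fun k : ℕ => Real.log (N k) / ((k:ℝ) * β))
      Filter.atTop (nhds L) := by
    apply hL.congr
    intro k
    rw [hden_eq k, neg_neg]
  have hN1 : ∀ k, 1 ≤ N k := by
    intro k
    obtain ⟨x, hx⟩ := hXne
    have := (Set.ncard_pos (meets_finite (hεk k) hX.isBounded)).2
      (meets_nonempty (hεk k) hx)
    rw [hN k]
    omega
  have hL0 : 0 ≤ L := by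
    apply ge_of_tendsto hL'
    filter_upwards [Filter.eventually_ge_atTop 1] with k hk
    apply div_nonneg
    · exact Real.log_nonneg (by exact_mod_cast hN1 k)
    · exact mul_nonneg (Nat.cast_nonneg k) hβ.le
  set A := d / 4 with hAdef
  set B := d + 2 * Real.sqrt n with hBdef
  have hA : 0 < A := by rw [hAdef]; linarith
  have hB : 0 < B := by rw [hBdef]; nlinarith
  have hlog2 : 0 < Real.log 2 := Real.log_pos one_lt_two
  set C := ((n:ℝ) + 1) * Real.log 2 with hCdef
  have hC : 0 < C := by
    rw [hCdef]
    have : (0:ℝ) ≤ (n:ℝ) := Nat.cast_nonneg n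
    nlinarith
  have hup : Filter.Tendsto (fun k : ℕ => (Real.log (N k) + C) / ((k:ℝ) * β + Real.log A))
      Filter.atTop (nhds L) := aux_tendsto β (Real.log A) C L hβ _ hL'
  have hloin : Filter.Tendsto
      (fun k : ℕ => (Real.log (N k) + -C) / ((k:ℝ) * β + Real.log B))
      Filter.atTop (nhds L) := aux_tendsto β (Real.log B) (-C) L hβ _ hL'
  have hlow : Filter.Tendsto
      (fun k : ℕ => max 0 ((Real.log (N k) + -C) / ((k:ℝ) * β + Real.log B)))
      Filter.atTop (nhds L) := by
    have h := Filter.Tendsto.max (tendsto_const_nhds (x := (0:ℝ))) hloin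
    rwa [max_eq_right hL0] at h
  have Esmall : ∀ᶠ k : ℕ in Filter.atTop, c ^ k * (2 + 12 * Real.sqrt n) < d := by
    have h0 : Filter.Tendsto (fun k : ℕ => c ^ k * (2 + 12 * Real.sqrt n))
        Filter.atTop (nhds (0 * (2 + 12 * Real.sqrt n))) :=
      Filter.Tendsto.mul_const _ (tendsto_pow_atTop_nhds_zero_of_lt_one hc.1.le hc.2)
    rw [zero_mul] at h0
    exact h0.eventually_lt_const hdiam
  have EA : ∀ᶠ k : ℕ in Filter.atTop, 0 < (k:ℝ) * β + Real.log A :=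
    (aux_top β (Real.log A) hβ).eventually_gt_atTop 0
  have EB : ∀ᶠ k : ℕ in Filter.atTop, 0 < (k:ℝ) * β + Real.log B :=
    (aux_top β (Real.log B) hβ).eventually_gt_atTop 0
  -- the package, for every small enough k
  have main : ∀ k : ℕ, c ^ k * (2 + 12 * Real.sqrt n) < d →
      (∀ a, ¬ IsFocal (F k) a) ∧
      (0 < (k:ℝ) * β + Real.log A → 0 < (k:ℝ) * β + Real.log B →
        (max 0 ((Real.log (N k) + -C) / ((k:ℝ) * β + Real.log B)) ≤ dimfH (F k) ∧
         dimfH (F k) ≤ (Real.log (N k) + C) / ((k:ℝ) * β + Real.log A))) := by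
    intro k hsm
    have hε := hεk k
    have hsmall4 : c ^ k * (2 + 4 * Real.sqrt n) < d := by nlinarith
    obtain ⟨hfoc, hdim, hT2, hc2T, hTc, hdl, hdu, hεlt⟩ :=
      scale_package hX.isBounded hdiam hXne hn hε hsmall4 (hF k)
    refine ⟨hfoc, fun hEAk hEBk => ?_⟩
    set Δ := Metric.diam ((F k : Finset (EuclideanSpace ℝ (Fin n))) :
      Set (EuclideanSpace ℝ (Fin n))) with hΔdef
    set T := Tmin (F k) with hTdef
    have hΔpos : 0 < Δ := lt_trans hε hεlt
    have hT1 : (1:ℝ) < (T:ℝ) := by exact_mod_cast hT2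
    have hNk1 : (1:ℝ) ≤ (N k : ℝ) := by exact_mod_cast hN1 k
    have hAΔ : A ≤ Δ := by
      have h12 : 12 * (c ^ k * Real.sqrt n) < d := by nlinarith
      rw [hAdef]
      nlinarith
    have hΔB : Δ ≤ B := by
      have hck1 : c ^ k ≤ 1 := pow_le_one₀ hc.1.le hc.2.le
      have : c ^ k * Real.sqrt n ≤ Real.sqrt n := by nlinarith
      rw [hBdef]
      nlinarith
    have hld : Real.log (Δ / c ^ k) = Real.log Δ + (k:ℝ) * β := by
      rw [Real.log_div hΔpos.ne' (hε).ne', hden_eq k]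
      ring
    have hlogAΔ : Real.log A ≤ Real.log Δ := Real.log_le_log hA hAΔ
    have hlogΔB : Real.log Δ ≤ Real.log B := Real.log_le_log hΔpos hΔB
    have hDpos : 0 < Real.log Δ + (k:ℝ) * β := by linarith
    have hDge : (k:ℝ) * β + Real.log A ≤ Real.log Δ + (k:ℝ) * β := by linarith
    have hDle : Real.log Δ + (k:ℝ) * β ≤ (k:ℝ) * β + Real.log B := by linarith
    have hTlogpos : 0 < Real.log (T:ℝ) := Real.log_pos hT1
    -- upper bound on log T
    have hTup : Real.log (T:ℝ) ≤ Real.log (N k) + C := by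
      have hcardle : (T:ℕ) ≤ 2 ^ n * N k := by
        calc (T:ℕ) ≤ (F k).card := hTc
          _ ≤ 2 ^ n * {m : Fin n → ℤ | (cube n (c ^ k) m ∩ X).Nonempty}.ncard :=
            cardF_le_ncard hε hX.isBounded (hF k)
          _ = 2 ^ n * N k := by rw [← hN k]
      have hcast : (T:ℝ) ≤ (2:ℝ) ^ n * (N k : ℝ) := by exact_mod_cast hcardle
      have hlogle : Real.log (T:ℝ) ≤ Real.log ((2:ℝ) ^ n * (N k : ℝ)) :=
        Real.log_le_log (by linarith) hcast
      have heq : Real.log ((2:ℝ) ^ n * (N k : ℝ)) = n * Real.log 2 + Real.log (N k) := by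
        rw [Real.log_mul (by positivity) (by linarith), Real.log_pow]
      rw [heq] at hlogle
      have : (n:ℝ) * Real.log 2 ≤ C := by
        rw [hCdef]
        nlinarith [Nat.cast_nonneg (α := ℝ) n]
      linarith
    -- lower bound on log T
    have hTlow : Real.log (N k) + -C ≤ Real.log (T:ℝ) := by
      have hcardle : N k ≤ 2 * T := by
        calc N k = {m : Fin n → ℤ | (cube n (c ^ k) m ∩ X).Nonempty}.ncard := hN k
          _ ≤ (F k).card := ncard_le_cardF hε (hF k)
          _ ≤ 2 * T := hc2T
      have hcast : (N k : ℝ) ≤ 2 * (T:ℝ) := by exact_mod_cast hcardle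
      have hlogle : Real.log (N k) ≤ Real.log (2 * (T:ℝ)) :=
        Real.log_le_log (by linarith) hcast
      have heq : Real.log (2 * (T:ℝ)) = Real.log 2 + Real.log (T:ℝ) := by
        rw [Real.log_mul (by norm_num) (by linarith)]
      rw [heq] at hlogle
      have : Real.log 2 ≤ C := by
        rw [hCdef]
        nlinarith [Nat.cast_nonneg (α := ℝ) n]
      linarith
    rw [hdim, hld]
    constructor
    · apply max_le
      · exact (div_pos hTlogpos hDpos).le
      · exact div_le_div₀ hTlogpos.le hTlow hDpos hDle
    · exact div_le_div₀ (by linarith [Real.log_nonneg hNk1]) hTup hEAk hDge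
  constructor
  · obtain ⟨K, hK⟩ := Filter.eventually_atTop.1 Esmall
    exact ⟨K, fun k hk a => (main k (hK k hk)).1 a⟩
  · apply tendsto_of_tendsto_of_tendsto_of_le_of_le' hlow hup
    · filter_upwards [Esmall, EA, EB] with k hsm hEAk hEBk
      exact ((main k hsm).2 hEAk hEBk).1
    · filter_upwards [Esmall, EA, EB] with k hsm hEAk hEBk
      exact ((main k hsm).2 hEAk hEBk).2
end
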